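/- arXiv:2211.07020 — 6 statements merged into one kernel-verified Lean document; each statement's English description precedes it below -/
import Mathlib

section
/- For every forest T with vertex set [n], the ideals I and I_T have the same Hilbert function: for every integer d ≥ 0, the K-dimension of the degree-d homogeneous component of I equals the K-dimension of the degree-d homogeneous component of I_T. -/
open MvPolynomial
open scoped Classical

/-- The polynomial ring `R = K[x_{ij} : 1 ≤ i ≤ j ≤ n]`, realized as the multivariate
polynomial ring whose variables are indexed by unordered pairs of elements of `Fin n`
(so that `x_{ij} = x_{ji}` automatically). -/
abbrev SymPolyRing (K : Type*) [Field K] (n : ℕ) := MvPolynomial (Sym2 (Fin n)) K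

/-- The monomial `(∏_{i ∈ [n]∖V(p)} x_{ii}) · x_p` associated to a path `p`, where `V(p)`
is the vertex set of `p` and `x_p = ∏_{ij ∈ p} x_{ij}`. -/
noncomputable def pathGenerator {K : Type*} [Field K] {n : ℕ} {T : SimpleGraph (Fin n)}
    {k l : Fin n} (p : T.Walk k l) : SymPolyRing K n :=
  (∏ i ∈ Finset.univ \ p.support.toFinset, MvPolynomial.X s(i, i)) *
    (p.edges.map fun e => (MvPolynomial.X e : SymPolyRing K n)).prod

/-- The squarefree monomial ideal `I_T` associated to a forest `T` on `[n]`, generated by: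
(i)  `(x_{11}⋯x_{nn})/x_{ii}` for all `i`;
(ii) `(x_{11}⋯x_{nn})/(x_{kk}x_{ll}) · x_{kl}` for all `k < l` with no path in `T`
     between `k` and `l`;
(iii) `(∏_{i ∈ [n]∖V(p)} x_{ii}) · x_p` for every path `p` in `T` (a path having at least
     one edge and no repeated vertex). -/
noncomputable def forestIdeal (K : Type*) [Field K] (n : ℕ) (T : SimpleGraph (Fin n)) :
    Ideal (SymPolyRing K n) :=
  Ideal.span { m : SymPolyRing K n |
    (∃ i : Fin n, m = ∏ j ∈ Finset.univ.erase i, MvPolynomial.X s(j, j)) ∨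
    (∃ k l : Fin n, k < l ∧ ¬ T.Reachable k l ∧
      m = (∏ j ∈ (Finset.univ.erase k).erase l, MvPolynomial.X s(j, j)) *
        MvPolynomial.X s(k, l)) ∨
    (∃ (k l : Fin n) (p : T.Walk k l), p.IsPath ∧ k ≠ l ∧ m = pathGenerator p) }

/-- The dimension over `K` of the degree-`d` homogeneous component of an ideal `J` of
`MvPolynomial σ K`. -/
noncomputable def idealComponentDim (K : Type*) [Field K] {σ : Type*}
    (J : Ideal (MvPolynomial σ K)) (d : ℕ) : ℕ :=
  Module.finrank K
    ↥(Submodule.restrictScalars K J ⊓ homogeneousSubmodule σ K d)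

section DimCount
open Finsupp
variable (K : Type*) [Field K] {σ : Type*} [Finite σ]

theorem span_inf_homog (S : Set (σ →₀ ℕ)) (d : ℕ) :
    (Submodule.restrictScalars K (Ideal.span ((fun e => monomial e (1:K)) '' S))
      ⊓ homogeneousSubmodule σ K d : Submodule K (MvPolynomial σ K))
    = Submodule.span K ((fun e => (monomial e (1:K) : MvPolynomial σ K)) ''
        {a | a.degree = d ∧ ∃ g ∈ S, g ≤ a}) := by
  apply le_antisymm
  · rintro x ⟨hxJ, hxH⟩
    simp only [SetLike.mem_coe, Submodule.restrictScalars_mem, mem_ideal_span_monomial_image] at hxJ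
    simp only [SetLike.mem_coe, mem_homogeneousSubmodule] at hxH
    rw [← support_sum_monomial_coeff x]
    refine Submodule.sum_mem _ (fun a ha => ?_)
    have h1 : (monomial a) (coeff a x) = (coeff a x) • (monomial a (1:K)) := by
      rw [smul_monomial, smul_eq_mul, mul_one]
    rw [h1]
    refine Submodule.smul_mem _ _ (Submodule.subset_span ⟨a, ⟨?_, hxJ a ha⟩, rfl⟩)
    have := hxH (MvPolynomial.mem_support_iff.mp ha)
    rw [degree_eq_weight_one]
    exact this
  · rw [Submodule.span_le]
    rintro x ⟨a, ⟨hdeg, hdvd⟩, rfl⟩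
    constructor
    · rw [SetLike.mem_coe, Submodule.restrictScalars_mem, mem_ideal_span_monomial_image]
      intro xi hxi
      rw [support_monomial, if_neg one_ne_zero] at hxi
      rw [Finset.mem_singleton] at hxi
      subst hxi
      exact hdvd
    · rw [SetLike.mem_coe, mem_homogeneousSubmodule]
      exact isHomogeneous_monomial _ hdeg

theorem idealComponentDim_eq_card (S : Set (σ →₀ ℕ)) (d : ℕ) :
    idealComponentDim K (Ideal.span ((fun e => monomial e (1:K)) '' S)) d
      = Nat.card {a : σ →₀ ℕ // a.degree = d ∧ ∃ g ∈ S, g ≤ a} := by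
  classical
  set A : Set (σ →₀ ℕ) := {a | a.degree = d ∧ ∃ g ∈ S, g ≤ a} with hA
  have hAfin : A.Finite := by
    apply (Finsupp.finite_of_degree_le d).subset
    intro a ha; exact ha.1.le
  haveI : Fintype A := hAfin.fintype
  have hli : LinearIndependent K (fun a : A => (monomial a.1 (1:K) : MvPolynomial σ K)) := by
    have h1 := (basisMonomials σ K).linearIndependent
    have h2 := h1.comp (Subtype.val : A → (σ →₀ ℕ)) Subtype.val_injective
    exact h2
  have hrange : Set.range (fun a : A => (monomial a.1 (1:K) : MvPolynomial σ K))
      = (fun e => (monomial e (1:K) : MvPolynomial σ K)) '' A := by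
    rw [Set.image_eq_range]
  rw [idealComponentDim, span_inf_homog, ← hA, ← hrange, finrank_span_eq_card hli]
  exact (Nat.card_eq_fintype_card).symm

end DimCount

section Part2A
variable {n : ℕ}

abbrev Expo (n : ℕ) := Sym2 (Fin n) →₀ ℕ

noncomputable def gdiag (n : ℕ) (i : Fin n) : Expo n :=
  ∑ j ∈ Finset.univ.erase i, Finsupp.single s(j,j) 1

noncomputable def gpair (n : ℕ) (k l : Fin n) : Expo n :=
  (∑ j ∈ (Finset.univ.erase k).erase l, Finsupp.single s(j,j) 1) + Finsupp.single s(k,l) 1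

noncomputable def gpath {n : ℕ} {T : SimpleGraph (Fin n)} {k l : Fin n} (p : T.Walk k l) :
    Expo n :=
  (∑ i ∈ Finset.univ \ p.support.toFinset, Finsupp.single s(i,i) 1)
    + (p.edges.map (fun e => Finsupp.single e 1)).sum

def expS (n : ℕ) (T : SimpleGraph (Fin n)) : Set (Expo n) :=
  {g | (∃ i, g = gdiag n i) ∨
       (∃ k l, k < l ∧ ¬T.Reachable k l ∧ g = gpair n k l) ∨
       (∃ k l, ∃ p : T.Walk k l, p.IsPath ∧ k ≠ l ∧ g = gpath p)}

variable {K : Type*} [Field K]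

lemma X_eq_monomial {β : Type*} (e : β) : (X e : MvPolynomial β K) = monomial (Finsupp.single e 1) 1 := by
  rw [← X_pow_eq_monomial, pow_one]

lemma prod_X_eq {α β : Type*} (s : Finset α) (f : α → β) :
    (∏ j ∈ s, (X (f j) : MvPolynomial β K)) = monomial (∑ j ∈ s, Finsupp.single (f j) 1) 1 := by
  classical
  induction s using Finset.induction_on with
  | empty => simp [monomial_zero']
  | insert _ _ hx ih =>
      rw [Finset.prod_insert hx, Finset.sum_insert hx, ih, X_eq_monomial, monomial_mul, one_mul]

lemma list_prod_X {β : Type*} (l : List β) :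
    ((l.map (fun e => (X e : MvPolynomial β K))).prod)
      = monomial ((l.map (fun e => Finsupp.single e 1)).sum) 1 := by
  induction l with
  | nil => simp [monomial_zero']
  | cons e t ih =>
      rw [List.map_cons, List.prod_cons, List.map_cons, List.sum_cons, ih, X_eq_monomial,
        monomial_mul, one_mul]

lemma pathGenerator_eq {T : SimpleGraph (Fin n)} {k l : Fin n} (p : T.Walk k l) :
    (pathGenerator p : SymPolyRing K n) = monomial (gpath p) 1 := by
  rw [pathGenerator, gpath, prod_X_eq, list_prod_X, monomial_mul, one_mul]

lemma forestIdeal_eq (n : ℕ) (T : SimpleGraph (Fin n)) :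
    forestIdeal K n T = Ideal.span ((fun e => monomial e (1:K)) '' expS n T) := by
  rw [forestIdeal]
  congr 1
  ext m
  constructor
  · rintro (⟨i, rfl⟩ | ⟨k, l, hkl, hr, rfl⟩ | ⟨k, l, p, hp, hkl, rfl⟩)
    · exact ⟨gdiag n i, Or.inl ⟨i, rfl⟩, (prod_X_eq _ _).symm⟩
    · exact ⟨gpair n k l, Or.inr (Or.inl ⟨k, l, hkl, hr, rfl⟩), by
        rw [gpair, prod_X_eq, X_eq_monomial, monomial_mul, one_mul]⟩
    · exact ⟨gpath p, Or.inr (Or.inr ⟨k, l, p, hp, hkl, rfl⟩), (pathGenerator_eq p).symm⟩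
  · rintro ⟨g, (⟨i, rfl⟩ | ⟨k, l, hkl, hr, rfl⟩ | ⟨k, l, p, hp, hkl, rfl⟩), rfl⟩
    · exact Or.inl ⟨i, (prod_X_eq _ _).symm⟩
    · exact Or.inr (Or.inl ⟨k, l, hkl, hr, by
        rw [gpair, prod_X_eq, X_eq_monomial, monomial_mul, one_mul]⟩)
    · exact Or.inr (Or.inr ⟨k, l, p, hp, hkl, (pathGenerator_eq p).symm⟩)

end Part2A


section Part2B
variable {n : ℕ}

lemma sym2_diag_ne {k l j : Fin n} (hkl : k ≠ l) : s(k,l) ≠ s(j,j) := by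
  intro hc
  rcases Sym2.eq_iff.mp hc with ⟨h1, h2⟩ | ⟨h1, h2⟩ <;> exact hkl (h1.trans h2.symm)

lemma diagsum_apply_diag (s : Finset (Fin n)) (m : Fin n) :
    (∑ j ∈ s, Finsupp.single s(j,j) (1:ℕ)) s(m,m) = if m ∈ s then 1 else 0 := by
  classical
  rw [Finsupp.finset_sum_apply]
  have h : ∀ j ∈ s, (Finsupp.single s(j,j) (1:ℕ)) s(m,m) = if j = m then 1 else 0 := by
    intro j _
    rw [Finsupp.single_apply]
    by_cases h : j = m
    · rw [if_pos (by rw [h]), if_pos h]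
    · rw [if_neg (by
        intro hc
        rcases Sym2.eq_iff.mp hc with ⟨h1, h2⟩ | ⟨h1, h2⟩ <;> exact h h1), if_neg h]
  rw [Finset.sum_congr rfl h, Finset.sum_ite_eq' s m (fun _ => 1)]

lemma diagsum_apply_offdiag (s : Finset (Fin n)) {k l : Fin n} (h : k ≠ l) :
    (∑ j ∈ s, Finsupp.single s(j,j) (1:ℕ)) s(k,l) = 0 := by
  classical
  rw [Finsupp.finset_sum_apply]
  refine Finset.sum_eq_zero (fun j _ => ?_)
  rw [Finsupp.single_apply, if_neg]
  exact fun hc => sym2_diag_ne h hc.symm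

lemma listsum_apply (l : List (Sym2 (Fin n))) (y : Sym2 (Fin n)) :
    ((l.map (fun e => Finsupp.single e (1:ℕ))).sum) y = l.count y := by
  induction l with
  | nil => simp
  | cons e t ih =>
      rw [List.map_cons, List.sum_cons, Finsupp.add_apply, ih, List.count_cons,
        Finsupp.single_apply]
      by_cases h : e = y
      · subst h; simp [Nat.add_comm]
      · simp [h, Ne.symm h]

lemma gdiag_le {i : Fin n} {a : Expo n} :
    gdiag n i ≤ a ↔ ∀ j, j ≠ i → 1 ≤ a s(j,j) := by
  constructor
  · intro h j hj
    have := h s(j,j)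
    rwa [gdiag, diagsum_apply_diag, if_pos (by simp [hj])] at this
  · intro h y
    induction y with
    | _ u v =>
      by_cases huv : u = v
      · subst huv
        rw [gdiag, diagsum_apply_diag]
        by_cases hu : u ∈ Finset.univ.erase i
        · rw [if_pos hu]; exact h u (Finset.mem_erase.mp hu).1
        · rw [if_neg hu]; exact Nat.zero_le _
      · rw [gdiag, diagsum_apply_offdiag _ huv]; exact Nat.zero_le _

lemma gpair_le {k l : Fin n} (hkl : k ≠ l) {a : Expo n} :
    gpair n k l ≤ a ↔ ((∀ j, j ≠ k → j ≠ l → 1 ≤ a s(j,j)) ∧ 1 ≤ a s(k,l)) := by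
  constructor
  · intro h
    refine ⟨fun j hjk hjl => ?_, ?_⟩
    · have hh := h s(j,j)
      have hs : (Finsupp.single s(k,l) (1:ℕ)) s(j,j) = 0 := by
        rw [Finsupp.single_apply, if_neg (sym2_diag_ne hkl)]
      rwa [gpair, Finsupp.add_apply, hs, add_zero, diagsum_apply_diag,
        if_pos (by simp [hjk, hjl])] at hh
    · have hh := h s(k,l)
      rwa [gpair, Finsupp.add_apply, diagsum_apply_offdiag _ hkl, zero_add,
        Finsupp.single_apply, if_pos rfl] at hh
  · intro ⟨h1, h2⟩ y
    induction y with
    | _ u v =>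
      by_cases huv : u = v
      · subst huv
        have hs : (Finsupp.single s(k,l) (1:ℕ)) s(u,u) = 0 := by
          rw [Finsupp.single_apply, if_neg (sym2_diag_ne hkl)]
        rw [gpair, Finsupp.add_apply, hs, add_zero, diagsum_apply_diag]
        by_cases hu : u ∈ (Finset.univ.erase k).erase l
        · rw [if_pos hu]
          exact h1 u (Finset.mem_erase.mp (Finset.mem_erase.mp hu).2).1
            (Finset.mem_erase.mp hu).1
        · rw [if_neg hu]; exact Nat.zero_le _
      · rw [gpair, Finsupp.add_apply, diagsum_apply_offdiag _ huv, zero_add,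
          Finsupp.single_apply]
        by_cases hy : s(k,l) = s(u,v)
        · rw [if_pos hy, ← hy]; exact h2
        · rw [if_neg hy]; exact Nat.zero_le _

lemma diag_not_mem_edges {T : SimpleGraph (Fin n)} {u v : Fin n} {p : T.Walk u v} (i : Fin n) :
    s(i,i) ∉ p.edges := by
  intro h
  have := p.edges_subset_edgeSet h
  rw [SimpleGraph.mem_edgeSet] at this
  exact T.irrefl this

lemma gpath_le {T : SimpleGraph (Fin n)} {k l : Fin n} {p : T.Walk k l} (hp : p.IsPath)
    {a : Expo n} :
    gpath p ≤ a ↔ ((∀ i, i ∉ p.support → 1 ≤ a s(i,i)) ∧ ∀ e ∈ p.edges, 1 ≤ a e) := by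
  have hnodup : p.edges.Nodup := hp.isTrail.edges_nodup
  constructor
  · intro h
    constructor
    · intro i hi
      have hh := h s(i,i)
      rwa [gpath, Finsupp.add_apply, diagsum_apply_diag,
        if_pos (by simp [hi]), listsum_apply,
        List.count_eq_zero_of_not_mem (diag_not_mem_edges i), add_zero] at hh
    · intro e he
      have hh := h e
      rw [gpath, Finsupp.add_apply, listsum_apply] at hh
      have h1 : 1 ≤ p.edges.count e := List.count_pos_iff.mpr he
      omega
  · intro ⟨h1, h2⟩ y
    rw [gpath, Finsupp.add_apply, listsum_apply]
    induction y with
    | _ u v =>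
      by_cases huv : u = v
      · subst huv
        rw [List.count_eq_zero_of_not_mem (diag_not_mem_edges u), add_zero, diagsum_apply_diag]
        by_cases hu : u ∈ Finset.univ \ p.support.toFinset
        · rw [if_pos hu]
          exact h1 u (by simpa using hu)
        · rw [if_neg hu]; exact Nat.zero_le _
      · rw [diagsum_apply_offdiag _ huv, zero_add]
        by_cases hy : s(u,v) ∈ p.edges
        · calc p.edges.count s(u,v) ≤ 1 := List.nodup_iff_count_le_one.mp hnodup _
            _ ≤ a s(u,v) := h2 _ hy
        · rw [List.count_eq_zero_of_not_mem hy]; exact Nat.zero_le _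

end Part2B


section Part2C
open SimpleGraph Equiv
variable {n : ℕ} {T : SimpleGraph (Fin n)}

lemma sym2_diag_eq {u v : Fin n} (h : s(u,u) = s(v,v)) : u = v := by
  rcases Sym2.eq_iff.mp h with ⟨h1, _⟩ | ⟨h1, _⟩ <;> exact h1

lemma sym2_ne_novertex {x y u v : Fin n} (h1 : u ≠ x) (h2 : u ≠ y) : s(x,y) ≠ s(u,v) := by
  intro hc
  rcases Sym2.eq_iff.mp hc with ⟨ha, hb⟩ | ⟨ha, hb⟩
  · exact h1 ha.symm
  · exact h2 hb.symm

noncomputable def tauPerm {T : SimpleGraph (Fin n)} :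
    ∀ {a b : Fin n}, T.Walk a b → Equiv.Perm (Sym2 (Fin n))
  | _, _, SimpleGraph.Walk.nil => 1
  | _, _, @SimpleGraph.Walk.cons _ _ a c _ _ q => Equiv.swap s(a,a) s(a,c) * tauPerm q

noncomputable def sigmaPerm {T : SimpleGraph (Fin n)} :
    ∀ {k l : Fin n}, T.Walk k l → Equiv.Perm (Sym2 (Fin n))
  | _, _, SimpleGraph.Walk.nil => 1
  | _, l, @SimpleGraph.Walk.cons _ _ k c _ _ q => Equiv.swap s(k,l) s(k,c) * tauPerm q

@[simp] lemma tauPerm_nil {a : Fin n} : tauPerm (SimpleGraph.Walk.nil : T.Walk a a) = 1 := rfl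

@[simp] lemma tauPerm_cons {a c b : Fin n} (h : T.Adj a c) (q : T.Walk c b) :
    tauPerm (SimpleGraph.Walk.cons h q) = Equiv.swap s(a,a) s(a,c) * tauPerm q := rfl

@[simp] lemma sigmaPerm_cons {k c l : Fin n} (h : T.Adj k c) (q : T.Walk c l) :
    sigmaPerm (SimpleGraph.Walk.cons h q) = Equiv.swap s(k,l) s(k,c) * tauPerm q := rfl

lemma tau_fix {a b : Fin n} (q : T.Walk a b) (x : Sym2 (Fin n))
    (h1 : ∀ u ∈ q.support, s(u,u) ≠ x) (h2 : x ∉ q.edges) : tauPerm q x = x := by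
  induction q with
  | nil => rfl
  | @cons u v w h q ih =>
      rw [tauPerm_cons, Equiv.Perm.mul_apply, ih
        (fun r hr => h1 r (by rw [SimpleGraph.Walk.support_cons]; exact List.mem_cons_of_mem _ hr))
        (fun hc => h2 (by rw [SimpleGraph.Walk.edges_cons]; exact List.mem_cons_of_mem _ hc)),
        Equiv.swap_apply_of_ne_of_ne]
      · exact (h1 u (by rw [SimpleGraph.Walk.support_cons]; exact List.mem_cons_self)).symm
      · intro hc
        exact h2 (by rw [SimpleGraph.Walk.edges_cons, hc]; exact List.mem_cons_self)

lemma tau_fix_end {a b : Fin n} (q : T.Walk a b) (hnd : q.support.Nodup) :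
    tauPerm q s(b,b) = s(b,b) := by
  induction q with
  | nil => rfl
  | @cons u v w h q ih =>
      rw [SimpleGraph.Walk.support_cons, List.nodup_cons] at hnd
      rw [tauPerm_cons, Equiv.Perm.mul_apply, ih hnd.2, Equiv.swap_apply_of_ne_of_ne]
      · intro hc
        have := sym2_diag_eq hc
        subst this
        exact hnd.1 q.end_mem_support
      · exact (sym2_diag_ne h.ne).symm

lemma tau_dart_diag {a b : Fin n} (q : T.Walk a b) (hnd : q.support.Nodup) {d : T.Dart}
    (hd : d ∈ q.darts) : tauPerm q s(d.fst, d.fst) = s(d.fst, d.snd) := by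
  induction q with
  | nil => simp at hd
  | @cons u v w h q ih =>
      rw [SimpleGraph.Walk.support_cons, List.nodup_cons] at hnd
      rw [SimpleGraph.Walk.darts_cons, List.mem_cons] at hd
      rcases hd with rfl | hd
      · rw [tauPerm_cons, Equiv.Perm.mul_apply,
          tau_fix q _ (fun r hr hc => hnd.1 (by rwa [sym2_diag_eq hc] at hr)) (diag_not_mem_edges _),
          Equiv.swap_apply_left]
      · rw [tauPerm_cons, Equiv.Perm.mul_apply, ih hnd.2 hd, Equiv.swap_apply_of_ne_of_ne]
        · exact sym2_diag_ne d.fst_ne_snd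
        · exact sym2_ne_novertex
            (fun hc => hnd.1 (hc ▸ q.dart_fst_mem_support_of_mem_darts hd))
            (fun hc => hnd.1 (hc ▸ q.dart_snd_mem_support_of_mem_darts hd))

lemma tau_dart_edge {a b : Fin n} (q : T.Walk a b) (hnd : q.support.Nodup) {d : T.Dart}
    (hd : d ∈ q.darts) : tauPerm q s(d.fst, d.snd) = s(d.fst, d.fst) := by
  induction q with
  | nil => simp at hd
  | @cons u v w h q ih =>
      rw [SimpleGraph.Walk.support_cons, List.nodup_cons] at hnd
      rw [SimpleGraph.Walk.darts_cons, List.mem_cons] at hd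
      rcases hd with rfl | hd
      · rw [tauPerm_cons, Equiv.Perm.mul_apply,
          tau_fix q _ (fun r hr => (sym2_diag_ne h.ne).symm)
            (fun hc => hnd.1 (q.fst_mem_support_of_mem_edges hc)),
          Equiv.swap_apply_right]
      · rw [tauPerm_cons, Equiv.Perm.mul_apply, ih hnd.2 hd, Equiv.swap_apply_of_ne_of_ne]
        · intro hc
          have h2 := sym2_diag_eq hc
          exact hnd.1 (h2 ▸ q.dart_fst_mem_support_of_mem_darts hd)
        · exact (sym2_diag_ne h.ne).symm

lemma exists_dart_fst {a b : Fin n} (q : T.Walk a b) : ∀ {u : Fin n}, u ∈ q.support → u ≠ b →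
    ∃ d ∈ q.darts, d.fst = u := by
  induction q with
  | nil =>
      intro u hu hub
      simp at hu
      exact absurd hu hub
  | @cons a' c w h q ih =>
      intro u hu hub
      rw [SimpleGraph.Walk.support_cons, List.mem_cons] at hu
      rcases hu with rfl | hu
      · exact ⟨⟨(u, c), h⟩, by rw [SimpleGraph.Walk.darts_cons]; exact List.mem_cons_self, rfl⟩
      · obtain ⟨d, hd, hdf⟩ := ih hu hub
        exact ⟨d, by rw [SimpleGraph.Walk.darts_cons]; exact List.mem_cons_of_mem _ hd, hdf⟩

lemma dart_fst_ne_end {a b : Fin n} (q : T.Walk a b) : q.support.Nodup → ∀ {d : T.Dart},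
    d ∈ q.darts → d.fst ≠ b := by
  induction q with
  | nil =>
      intro _ d hd
      simp at hd
  | @cons u v w h q ih =>
      intro hnd d hd
      rw [SimpleGraph.Walk.support_cons, List.nodup_cons] at hnd
      rw [SimpleGraph.Walk.darts_cons, List.mem_cons] at hd
      rcases hd with rfl | hd
      · exact fun hc => hnd.1 (hc ▸ q.end_mem_support)
      · exact ih hnd.2 hd

lemma mem_edges_exists_dart {a b : Fin n} (q : T.Walk a b) {x : Sym2 (Fin n)}
    (hx : x ∈ q.edges) : ∃ d ∈ q.darts, x = s(d.fst, d.snd) := by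
  obtain ⟨d, hd, rfl⟩ := List.mem_map.mp hx
  exact ⟨d, hd, rfl⟩

lemma tau_invol {a b : Fin n} (q : T.Walk a b) (hnd : q.support.Nodup) (x : Sym2 (Fin n)) :
    tauPerm q (tauPerm q x) = x := by
  by_cases hx1 : ∃ u ∈ q.support, s(u,u) = x
  · obtain ⟨u, hu, rfl⟩ := hx1
    by_cases hub : u = b
    · subst hub
      rw [tau_fix_end q hnd, tau_fix_end q hnd]
    · obtain ⟨d, hd, rfl⟩ := exists_dart_fst q hu hub
      rw [tau_dart_diag q hnd hd, tau_dart_edge q hnd hd]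
  · by_cases hx2 : x ∈ q.edges
    · obtain ⟨d, hd, rfl⟩ := mem_edges_exists_dart q hx2
      rw [tau_dart_edge q hnd hd, tau_dart_diag q hnd hd]
    · push_neg at hx1
      rw [tau_fix q x hx1 hx2, tau_fix q x hx1 hx2]

section Sigma
variable {k c l : Fin n} (h : T.Adj k c) (q : T.Walk c l)

lemma cons_path_facts (hp : (SimpleGraph.Walk.cons h q).IsPath) : q.IsPath ∧ k ∉ q.support ∧ k ≠ l := by
  rw [SimpleGraph.Walk.cons_isPath_iff] at hp
  exact ⟨hp.1, hp.2, fun hc => hp.2 (hc ▸ q.end_mem_support)⟩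

lemma sigma_diag_k (hp : (SimpleGraph.Walk.cons h q).IsPath) : sigmaPerm (SimpleGraph.Walk.cons h q) s(k,k) = s(k,k) := by
  obtain ⟨hq, hknotin, hkl⟩ := cons_path_facts h q hp
  rw [sigmaPerm_cons, Equiv.Perm.mul_apply,
    tau_fix q _ (fun r hr hc => hknotin (by rwa [sym2_diag_eq hc] at hr)) (diag_not_mem_edges _),
    Equiv.swap_apply_of_ne_of_ne ((sym2_diag_ne hkl).symm) ((sym2_diag_ne h.ne).symm)]

lemma sigma_diag_l (hp : (SimpleGraph.Walk.cons h q).IsPath) : sigmaPerm (SimpleGraph.Walk.cons h q) s(l,l) = s(l,l) := by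
  obtain ⟨hq, hknotin, hkl⟩ := cons_path_facts h q hp
  rw [sigmaPerm_cons, Equiv.Perm.mul_apply, tau_fix_end q hq.support_nodup,
    Equiv.swap_apply_of_ne_of_ne ((sym2_diag_ne hkl).symm) ((sym2_diag_ne h.ne).symm)]

lemma sigma_diag_notmem (hp : (SimpleGraph.Walk.cons h q).IsPath) {i : Fin n} (hi : i ∉ (SimpleGraph.Walk.cons h q).support) :
    sigmaPerm (SimpleGraph.Walk.cons h q) s(i,i) = s(i,i) := by
  obtain ⟨hq, hknotin, hkl⟩ := cons_path_facts h q hp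
  rw [SimpleGraph.Walk.support_cons, List.mem_cons] at hi
  push_neg at hi
  rw [sigmaPerm_cons, Equiv.Perm.mul_apply,
    tau_fix q _ (fun r hr hc => hi.2 (by rwa [sym2_diag_eq hc] at hr)) (diag_not_mem_edges _),
    Equiv.swap_apply_of_ne_of_ne ((sym2_diag_ne hkl).symm) ((sym2_diag_ne h.ne).symm)]

lemma sigma_kl (hp : (SimpleGraph.Walk.cons h q).IsPath) : sigmaPerm (SimpleGraph.Walk.cons h q) s(k,l) = s(k,c) := by
  obtain ⟨hq, hknotin, hkl⟩ := cons_path_facts h q hp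
  rw [sigmaPerm_cons, Equiv.Perm.mul_apply,
    tau_fix q _ (fun r hr => (sym2_diag_ne hkl).symm)
      (fun hc => hknotin (q.fst_mem_support_of_mem_edges hc)),
    Equiv.swap_apply_left]

lemma sigma_kc (hp : (SimpleGraph.Walk.cons h q).IsPath) : sigmaPerm (SimpleGraph.Walk.cons h q) s(k,c) = s(k,l) := by
  obtain ⟨hq, hknotin, hkl⟩ := cons_path_facts h q hp
  rw [sigmaPerm_cons, Equiv.Perm.mul_apply,
    tau_fix q _ (fun r hr => (sym2_diag_ne h.ne).symm)
      (fun hc => hknotin (q.fst_mem_support_of_mem_edges hc)),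
    Equiv.swap_apply_right]

lemma sigma_dart_diag (hp : (SimpleGraph.Walk.cons h q).IsPath) {d : T.Dart} (hd : d ∈ q.darts) :
    sigmaPerm (SimpleGraph.Walk.cons h q) s(d.fst, d.fst) = s(d.fst, d.snd) := by
  obtain ⟨hq, hknotin, hkl⟩ := cons_path_facts h q hp
  rw [sigmaPerm_cons, Equiv.Perm.mul_apply, tau_dart_diag q hq.support_nodup hd,
    Equiv.swap_apply_of_ne_of_ne
      (sym2_ne_novertex (fun hc => hknotin (by rw [hc]; exact q.dart_fst_mem_support_of_mem_darts hd))
        (fun hc => hknotin (by rw [hc]; exact q.dart_snd_mem_support_of_mem_darts hd)))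
      (sym2_ne_novertex (fun hc => hknotin (by rw [hc]; exact q.dart_fst_mem_support_of_mem_darts hd))
        (fun hc => hknotin (by rw [hc]; exact q.dart_snd_mem_support_of_mem_darts hd)))]

lemma sigma_dart_edge (hp : (SimpleGraph.Walk.cons h q).IsPath) {d : T.Dart} (hd : d ∈ q.darts) :
    sigmaPerm (SimpleGraph.Walk.cons h q) s(d.fst, d.snd) = s(d.fst, d.fst) := by
  obtain ⟨hq, hknotin, hkl⟩ := cons_path_facts h q hp
  rw [sigmaPerm_cons, Equiv.Perm.mul_apply, tau_dart_edge q hq.support_nodup hd,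
    Equiv.swap_apply_of_ne_of_ne ((sym2_diag_ne hkl).symm) ((sym2_diag_ne h.ne).symm)]

lemma sigma_fix (x : Sym2 (Fin n)) (hx1 : ∀ u ∈ (SimpleGraph.Walk.cons h q).support, s(u,u) ≠ x)
    (hx2 : x ∉ (SimpleGraph.Walk.cons h q).edges) (hx3 : x ≠ s(k,l)) :
    sigmaPerm (SimpleGraph.Walk.cons h q) x = x := by
  rw [SimpleGraph.Walk.edges_cons, List.mem_cons] at hx2
  push_neg at hx2
  have ht := tau_fix q x (fun r hr => hx1 r (by rw [SimpleGraph.Walk.support_cons]; exact List.mem_cons_of_mem _ hr)) hx2.2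
  rw [sigmaPerm_cons, Equiv.Perm.mul_apply, ht, Equiv.swap_apply_of_ne_of_ne hx3 hx2.1]

lemma sigma_invol (hp : (SimpleGraph.Walk.cons h q).IsPath) (x : Sym2 (Fin n)) :
    sigmaPerm (SimpleGraph.Walk.cons h q) (sigmaPerm (SimpleGraph.Walk.cons h q) x) = x := by
  obtain ⟨hq, hknotin, hkl⟩ := cons_path_facts h q hp
  by_cases hx : x = s(k,l)
  · subst hx; rw [sigma_kl h q hp, sigma_kc h q hp]
  by_cases hx2 : x = s(k,c)
  · subst hx2; rw [sigma_kc h q hp, sigma_kl h q hp]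
  by_cases hx3 : x ∈ q.edges
  · obtain ⟨d, hd, rfl⟩ := mem_edges_exists_dart q hx3
    rw [sigma_dart_edge h q hp hd, sigma_dart_diag h q hp hd]
  by_cases hx4 : ∃ u ∈ (SimpleGraph.Walk.cons h q).support, s(u,u) = x
  · obtain ⟨u, hu, rfl⟩ := hx4
    rw [SimpleGraph.Walk.support_cons, List.mem_cons] at hu
    rcases hu with rfl | hu
    · rw [sigma_diag_k h q hp, sigma_diag_k h q hp]
    · by_cases hub : u = l
      · subst hub; rw [sigma_diag_l h q hp, sigma_diag_l h q hp]
      · obtain ⟨d, hd, rfl⟩ := exists_dart_fst q hu hub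
        rw [sigma_dart_diag h q hp hd, sigma_dart_edge h q hp hd]
  · push_neg at hx4
    have hne : x ∉ (SimpleGraph.Walk.cons h q).edges := by
      rw [SimpleGraph.Walk.edges_cons, List.mem_cons]
      push_neg
      exact ⟨hx2, hx3⟩
    rw [sigma_fix h q x hx4 hne hx, sigma_fix h q x hx4 hne hx]

end Sigma
end Part2C


section Part2D
open SimpleGraph
variable {n : ℕ}

noncomputable def Dset (a : Expo n) : Finset (Fin n) :=
  Finset.univ.filter (fun i => a s(i,i) = 0)

lemma mem_Dset {a : Expo n} {i : Fin n} : i ∈ Dset a ↔ a s(i,i) = 0 := by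
  simp [Dset]

lemma degree_equivMapDomain {β : Type*} (e : Equiv.Perm β) (a : β →₀ ℕ) :
    (Finsupp.equivMapDomain e a).degree = a.degree := by
  rw [Finsupp.degree_apply, Finsupp.degree_apply]
  rw [show (Finsupp.equivMapDomain e a).support = a.support.map e.toEmbedding from rfl]
  rw [Finset.sum_map]
  exact Finset.sum_congr rfl (fun x _ => by simp)

noncomputable def theWalk {T : SimpleGraph (Fin n)} {k l : Fin n} (h : T.Reachable k l) :
    T.Walk k l := (Classical.choice h).bypass

lemma theWalk_isPath {T : SimpleGraph (Fin n)} {k l : Fin n} (h : T.Reachable k l) :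
    (theWalk h).IsPath := SimpleGraph.Walk.bypass_isPath _

lemma theWalk_eq {T : SimpleGraph (Fin n)} (hT : T.IsAcyclic) {k l : Fin n}
    (h : T.Reachable k l) (p : T.Walk k l) (hp : p.IsPath) : p = theWalk h :=
  congrArg Subtype.val (hT.path_unique ⟨p, hp⟩ ⟨theWalk h, theWalk_isPath h⟩)

noncomputable def Phi (T : SimpleGraph (Fin n)) (a : Expo n) : Expo n :=
  if h : ∃ p : Fin n × Fin n, p.1 < p.2 ∧ Dset a = {p.1, p.2} ∧ T.Reachable p.1 p.2 then
    Finsupp.equivMapDomain (sigmaPerm (theWalk h.choose_spec.2.2)) a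
  else a

lemma pair_card {k l : Fin n} (hkl : k ≠ l) : ({k, l} : Finset (Fin n)).card = 2 := by
  rw [Finset.card_insert_of_notMem (by simp [hkl]), Finset.card_singleton]

section Metric
variable {T : SimpleGraph (Fin n)}

lemma path_length_eq_dist (hT : T.IsAcyclic) {x y : Fin n} (p : T.Walk x y) (hp : p.IsPath) :
    p.length = T.dist x y := by
  have h1 : T.dist x y ≤ p.length := SimpleGraph.dist_le p
  obtain ⟨w, hw⟩ := SimpleGraph.Reachable.exists_walk_length_eq_dist (⟨p⟩ : T.Reachable x y)
  have h2 : w.bypass = p :=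
    congrArg Subtype.val (hT.path_unique ⟨w.bypass, w.bypass_isPath⟩ ⟨p, hp⟩)
  have h3 : p.length ≤ w.length := h2 ▸ w.length_bypass_le
  omega

lemma dist_split (hT : T.IsAcyclic) {k l : Fin n} (p : T.Walk k l) (hp : p.IsPath) {x : Fin n}
    (hx : x ∈ p.support) : T.dist k x + T.dist x l = p.length := by
  have h1 : (p.takeUntil x hx).length = T.dist k x :=
    path_length_eq_dist hT _ (hp.takeUntil hx)
  have h2 : (p.dropUntil x hx).length = T.dist x l :=
    path_length_eq_dist hT _ (hp.dropUntil hx)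
  have h3 := congrArg SimpleGraph.Walk.length (p.take_spec hx)
  rw [SimpleGraph.Walk.length_append] at h3
  omega

lemma dist_on_path (hT : T.IsAcyclic) {k l : Fin n} (p : T.Walk k l) (hp : p.IsPath)
    {x y : Fin n} (hx : x ∈ p.support) (hy : y ∈ p.support) :
    T.dist x y ≤ p.length ∧
      (T.dist x y = p.length → (x = k ∧ y = l) ∨ (x = l ∧ y = k)) := by
  have hsplit := p.take_spec hx
  have hymem : y ∈ (p.takeUntil x hx).support ∨ y ∈ (p.dropUntil x hx).support := by
    rw [← SimpleGraph.Walk.mem_support_append_iff, hsplit]; exact hy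
  have hlen := congrArg SimpleGraph.Walk.length hsplit
  rw [SimpleGraph.Walk.length_append] at hlen
  have htake : (p.takeUntil x hx).length = T.dist k x :=
    path_length_eq_dist hT _ (hp.takeUntil hx)
  have hdrop : (p.dropUntil x hx).length = T.dist x l :=
    path_length_eq_dist hT _ (hp.dropUntil hx)
  have hcomm : T.dist x y = T.dist y x := SimpleGraph.dist_comm
  have h5 := dist_split hT p hp hy
  rcases hymem with hy' | hy'
  · have h4 := dist_split hT _ (hp.takeUntil hx) hy'
    constructor
    · omega
    · intro he
      right
      have hyk : T.dist k y = 0 := by omega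
      have hxl : T.dist x l = 0 := by omega
      constructor
      · exact (SimpleGraph.Reachable.dist_eq_zero_iff ⟨p.dropUntil x hx⟩).mp hxl
      · exact ((SimpleGraph.Reachable.dist_eq_zero_iff
          ⟨(p.takeUntil x hx).takeUntil y hy'⟩).mp hyk).symm
  · have h4 := dist_split hT _ (hp.dropUntil hx) hy'
    constructor
    · omega
    · intro he
      left
      have hyl : T.dist y l = 0 := by omega
      have hkx : T.dist k x = 0 := by omega
      constructor
      · exact ((SimpleGraph.Reachable.dist_eq_zero_iff ⟨p.takeUntil x hx⟩).mp hkx).symm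
      · exact (SimpleGraph.Reachable.dist_eq_zero_iff
          ⟨(p.dropUntil x hx).dropUntil y hy'⟩).mp hyl

end Metric

section Trim
variable {T : SimpleGraph (Fin n)}

lemma trim_end {k l : Fin n} (p : T.Walk k l) : p.IsPath → ∀ (D : Finset (Fin n)),
    (∀ x ∈ D, x ∈ p.support) → D.Nonempty →
    ∃ (v : Fin n) (q : T.Walk k v), q.IsPath ∧ (∀ x ∈ D, x ∈ q.support) ∧ v ∈ D ∧
      (∀ e ∈ q.edges, e ∈ p.edges) ∧ (∀ x ∈ q.support, x ∈ p.support) := by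
  induction p with
  | @nil u =>
      intro _ D hD hne
      refine ⟨u, SimpleGraph.Walk.nil, SimpleGraph.Walk.IsPath.nil, hD, ?_, by simp, by simp⟩
      obtain ⟨x, hx⟩ := hne
      have hxk := hD x hx
      simp at hxk
      rwa [← hxk]
  | @cons u v w h q ih =>
      intro hp D hD hne
      by_cases hcase : ∃ x ∈ D, x ∈ q.support
      · obtain ⟨hq, hu⟩ := (SimpleGraph.Walk.cons_isPath_iff h q).mp hp
        obtain ⟨v', q', hq'path, hq'cov, hv'D, hq'edges, hq'supp⟩ :=
          ih hq (D.filter (fun x => x ∈ q.support))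
            (fun x hx => (Finset.mem_filter.mp hx).2)
            (by obtain ⟨x, hx1, hx2⟩ := hcase; exact ⟨x, Finset.mem_filter.mpr ⟨hx1, hx2⟩⟩)
        refine ⟨v', SimpleGraph.Walk.cons h q', ?_, ?_, ?_, ?_, ?_⟩
        · rw [SimpleGraph.Walk.cons_isPath_iff]
          exact ⟨hq'path, fun hc => hu (hq'supp _ hc)⟩
        · intro x hx
          rw [SimpleGraph.Walk.support_cons, List.mem_cons]
          have h2 := hD x hx
          rw [SimpleGraph.Walk.support_cons, List.mem_cons] at h2
          rcases h2 with rfl | hx2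
          · exact Or.inl rfl
          · exact Or.inr (hq'cov x (Finset.mem_filter.mpr ⟨hx, hx2⟩))
        · exact (Finset.mem_filter.mp hv'D).1
        · intro e he
          rw [SimpleGraph.Walk.edges_cons, List.mem_cons] at he ⊢
          rcases he with rfl | he
          · exact Or.inl rfl
          · exact Or.inr (hq'edges _ he)
        · intro x hx
          rw [SimpleGraph.Walk.support_cons, List.mem_cons] at hx ⊢
          rcases hx with rfl | hx
          · exact Or.inl rfl
          · exact Or.inr (hq'supp _ hx)
      · push_neg at hcase
        refine ⟨u, SimpleGraph.Walk.nil, SimpleGraph.Walk.IsPath.nil, ?_, ?_, by simp, ?_⟩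
        · intro x hx
          have h2 := hD x hx
          rw [SimpleGraph.Walk.support_cons, List.mem_cons] at h2
          rcases h2 with rfl | h2
          · simp
          · exact absurd h2 (hcase x hx)
        · obtain ⟨x, hx⟩ := hne
          have h2 := hD x hx
          rw [SimpleGraph.Walk.support_cons, List.mem_cons] at h2
          rcases h2 with rfl | h2
          · exact hx
          · exact absurd h2 (hcase x hx)
        · intro x hx
          simp at hx
          rw [hx]
          exact SimpleGraph.Walk.start_mem_support _

lemma trim_both {k l : Fin n} (p : T.Walk k l) (hp : p.IsPath) (D : Finset (Fin n))
    (hD : ∀ x ∈ D, x ∈ p.support) (hcard : 2 ≤ D.card) :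
    ∃ (u v : Fin n) (q : T.Walk u v), q.IsPath ∧ u ≠ v ∧ u ∈ D ∧ v ∈ D ∧
      (∀ x ∈ D, x ∈ q.support) ∧ (∀ e ∈ q.edges, e ∈ p.edges) := by
  have hne : D.Nonempty := Finset.card_pos.mp (by omega)
  obtain ⟨v1, q1, hq1, hcov1, hv1, hedge1, hsupp1⟩ := trim_end p hp D hD hne
  obtain ⟨v2, q2, hq2, hcov2, hv2, hedge2, hsupp2⟩ :=
    trim_end q1.reverse hq1.reverse D
      (fun x hx => by
        rw [SimpleGraph.Walk.support_reverse, List.mem_reverse]; exact hcov1 x hx) hne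
  refine ⟨v1, v2, q2, hq2, ?_, hv1, hv2, hcov2, ?_⟩
  · intro hc
    subst hc
    have hnil := SimpleGraph.Walk.isPath_iff_eq_nil.mp hq2
    have hsub : D ⊆ {v1} := by
      intro x hx
      have h2 := hcov2 x hx
      rw [hnil] at h2
      simpa using h2
    have := Finset.card_le_card hsub
    rw [Finset.card_singleton] at this
    omega
  · intro e he
    have h2 := hedge2 e he
    rw [SimpleGraph.Walk.edges_reverse, List.mem_reverse] at h2
    exact hedge1 e h2

end Trim
end Part2D


section Part2E
open SimpleGraph
variable {n : ℕ}

lemma bot_walk_eq {k l : Fin n} (p : (⊥ : SimpleGraph (Fin n)).Walk k l) : k = l := by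
  cases p with
  | nil => rfl
  | cons h _ => exact absurd h (by simp)

lemma memBot_struct {a : Expo n} (h : ∃ g ∈ expS n ⊥, g ≤ a) :
    (Dset a).card ≤ 1 ∨ (∃ k l, k < l ∧ Dset a = {k, l} ∧ 1 ≤ a s(k,l)) := by
  obtain ⟨g, hg, hle⟩ := h
  rcases hg with ⟨i, rfl⟩ | ⟨k, l, hkl, _, rfl⟩ | ⟨k, l, p, _, hkl, _⟩
  · left
    have hsub : Dset a ⊆ {i} := by
      intro j hj
      rw [mem_Dset] at hj
      rw [Finset.mem_singleton]
      by_contra hji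
      have := gdiag_le.mp hle j hji
      omega
    calc (Dset a).card ≤ ({i} : Finset (Fin n)).card := Finset.card_le_card hsub
      _ = 1 := Finset.card_singleton i
  · obtain ⟨hdiag, hoff⟩ := (gpair_le hkl.ne).mp hle
    have hsub : Dset a ⊆ {k, l} := by
      intro j hj
      rw [mem_Dset] at hj
      by_contra hjm
      rw [Finset.mem_insert, Finset.mem_singleton] at hjm
      push_neg at hjm
      have := hdiag j hjm.1 hjm.2
      omega
    by_cases hcard : (Dset a).card ≤ 1
    · exact Or.inl hcard
    · right
      refine ⟨k, l, hkl, ?_, hoff⟩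
      apply Finset.eq_of_subset_of_card_le hsub
      rw [pair_card hkl.ne]
      omega
  · exact absurd (bot_walk_eq p) hkl

lemma equivMapDomain_sigma_apply {T : SimpleGraph (Fin n)} {k c l : Fin n} (h : T.Adj k c)
    (q : T.Walk c l) (hp : (SimpleGraph.Walk.cons h q).IsPath) (a : Expo n) (y : Sym2 (Fin n)) :
    Finsupp.equivMapDomain (sigmaPerm (SimpleGraph.Walk.cons h q)) a y
      = a (sigmaPerm (SimpleGraph.Walk.cons h q) y) := by
  rw [Finsupp.equivMapDomain_apply]
  congr 1
  rw [Equiv.symm_apply_eq]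
  exact (sigma_invol h q hp y).symm

lemma sigma_b_values {T : SimpleGraph (Fin n)} {k l : Fin n} (W : T.Walk k l) (hW : W.IsPath)
    (hkl : k ≠ l) (a : Expo n) :
    (Finsupp.equivMapDomain (sigmaPerm W) a s(k,k) = a s(k,k)) ∧
    (Finsupp.equivMapDomain (sigmaPerm W) a s(l,l) = a s(l,l)) ∧
    (∀ i, i ∉ W.support → Finsupp.equivMapDomain (sigmaPerm W) a s(i,i) = a s(i,i)) ∧
    (∀ i, i ∈ W.support → i ≠ k → i ≠ l →
      ∃ e ∈ W.edges, Finsupp.equivMapDomain (sigmaPerm W) a s(i,i) = a e) ∧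
    (∃ e ∈ W.edges, Finsupp.equivMapDomain (sigmaPerm W) a s(k,l) = a e) ∧
    (∀ e ∈ W.edges, ∃ y, (y = s(k,l) ∨ ∃ v, v ∈ W.support ∧ v ≠ k ∧ v ≠ l ∧ y = s(v,v)) ∧
      Finsupp.equivMapDomain (sigmaPerm W) a e = a y) := by
  cases W with
  | nil => exact absurd rfl hkl
  | @cons _ c _ h q =>
      obtain ⟨hq, hknotin, _⟩ := cons_path_facts h q hW
      have happly := equivMapDomain_sigma_apply h q hW a
      refine ⟨?_, ?_, ?_, ?_, ?_, ?_⟩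
      · rw [happly, sigma_diag_k h q hW]
      · rw [happly, sigma_diag_l h q hW]
      · intro i hi
        rw [happly, sigma_diag_notmem h q hW hi]
      · intro i hi hik hil
        rw [SimpleGraph.Walk.support_cons, List.mem_cons] at hi
        rcases hi with rfl | hi
        · exact absurd rfl hik
        · obtain ⟨d, hd, hdf⟩ := exists_dart_fst q hi hil
          refine ⟨s(d.fst, d.snd), ?_, ?_⟩
          · rw [SimpleGraph.Walk.edges_cons, List.mem_cons]
            exact Or.inr (List.mem_map_of_mem hd)
          · rw [← hdf, happly, sigma_dart_diag h q hW hd]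
      · refine ⟨s(k, c), ?_, ?_⟩
        · rw [SimpleGraph.Walk.edges_cons, List.mem_cons]
          exact Or.inl rfl
        · rw [happly, sigma_kl h q hW]
      · intro e he
        rw [SimpleGraph.Walk.edges_cons, List.mem_cons] at he
        rcases he with rfl | he
        · refine ⟨s(k,l), Or.inl rfl, ?_⟩
          rw [happly, sigma_kc h q hW]
        · obtain ⟨d, hd, rfl⟩ := mem_edges_exists_dart q he
          refine ⟨s(d.fst, d.fst), Or.inr ⟨d.fst, ?_, ?_, ?_, rfl⟩, ?_⟩
          · rw [SimpleGraph.Walk.support_cons, List.mem_cons]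
            exact Or.inr (q.dart_fst_mem_support_of_mem_darts hd)
          · exact fun hc => hknotin (hc ▸ q.dart_fst_mem_support_of_mem_darts hd)
          · exact dart_fst_ne_end q hq.support_nodup hd
          · rw [happly, sigma_dart_edge h q hW hd]

lemma equivMapDomain_sigma_invol {T : SimpleGraph (Fin n)} {k l : Fin n} (W : T.Walk k l)
    (hW : W.IsPath) (hkl : k ≠ l) (x : Expo n) :
    Finsupp.equivMapDomain (sigmaPerm W) (Finsupp.equivMapDomain (sigmaPerm W) x) = x := by
  rw [← Finsupp.equivMapDomain_trans]
  have htr : (sigmaPerm W).trans (sigmaPerm W) = Equiv.refl _ := by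
    cases W with
    | nil => exact absurd rfl hkl
    | cons h q => exact Equiv.ext (fun y => sigma_invol h q hW y)
  rw [htr, Finsupp.equivMapDomain_refl]

lemma pair_eq_pair {k1 l1 k2 l2 : Fin n} (h1 : k1 < l1) (h2 : k2 < l2)
    (hk : k2 ∈ ({k1, l1} : Finset (Fin n))) (hl : l2 ∈ ({k1, l1} : Finset (Fin n))) :
    k2 = k1 ∧ l2 = l1 := by
  rw [Finset.mem_insert, Finset.mem_singleton] at hk hl
  rcases hk with rfl | rfl <;> rcases hl with h | h
  · exact absurd (h ▸ h2) (lt_irrefl _)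
  · exact ⟨rfl, h⟩
  · constructor <;> omega
  · constructor <;> omega

lemma Phi_pair_reach {T : SimpleGraph (Fin n)} {a : Expo n} {k l : Fin n} (hkl : k < l)
    (hD : Dset a = {k, l}) (hr : T.Reachable k l) :
    Phi T a = Finsupp.equivMapDomain (sigmaPerm (theWalk hr)) a := by
  have hex : ∃ p : Fin n × Fin n, p.1 < p.2 ∧ Dset a = {p.1, p.2} ∧ T.Reachable p.1 p.2 :=
    ⟨(k, l), hkl, hD, hr⟩
  rw [Phi, dif_pos hex]
  obtain ⟨h1, h2, h3⟩ := hex.choose_spec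
  have hset : ({hex.choose.1, hex.choose.2} : Finset (Fin n)) = {k, l} := h2.symm.trans hD
  have hk2 : hex.choose.1 ∈ ({k, l} : Finset (Fin n)) := by rw [← hset]; simp
  have hl2 : hex.choose.2 ∈ ({k, l} : Finset (Fin n)) := by rw [← hset]; simp
  obtain ⟨hc1, hc2⟩ := pair_eq_pair hkl h1 hk2 hl2
  subst hc1
  subst hc2
  rfl

lemma Phi_pair_unreach {T : SimpleGraph (Fin n)} {a : Expo n} {k l : Fin n} (hkl : k < l)
    (hD : Dset a = {k, l}) (hnr : ¬T.Reachable k l) : Phi T a = a := by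
  rw [Phi, dif_neg]
  rintro ⟨p, h1, h2, h3⟩
  have hset : ({p.1, p.2} : Finset (Fin n)) = {k, l} := h2.symm.trans hD
  have hk2 : p.1 ∈ ({k, l} : Finset (Fin n)) := by rw [← hset]; simp
  have hl2 : p.2 ∈ ({k, l} : Finset (Fin n)) := by rw [← hset]; simp
  obtain ⟨hc1, hc2⟩ := pair_eq_pair hkl h1 hk2 hl2
  exact hnr (hc1 ▸ hc2 ▸ h3)

lemma Phi_eq_self_of_card_le {T : SimpleGraph (Fin n)} {a : Expo n}
    (h : (Dset a).card ≤ 1) : Phi T a = a := by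
  rw [Phi, dif_neg]
  rintro ⟨p, h1, h2, _⟩
  rw [h2, pair_card h1.ne] at h
  omega

lemma memBot_gdiag {a : Expo n} (hn : 2 ≤ n) (h : (Dset a).card ≤ 1) :
    ∃ g ∈ expS n ⊥, g ≤ a := by
  have : Nonempty (Fin n) := ⟨⟨0, by omega⟩⟩
  obtain ⟨i, hi⟩ := Finset.card_le_one_iff_subset_singleton.mp h
  refine ⟨gdiag n i, Or.inl ⟨i, rfl⟩, gdiag_le.mpr (fun j hj => ?_)⟩
  rw [Nat.one_le_iff_ne_zero]
  intro hz
  exact hj (Finset.mem_singleton.mp (hi (mem_Dset.mpr hz)))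

lemma memT_gdiag {T : SimpleGraph (Fin n)} {a : Expo n} (hn : 2 ≤ n)
    (h : (Dset a).card ≤ 1) : ∃ g ∈ expS n T, g ≤ a := by
  have : Nonempty (Fin n) := ⟨⟨0, by omega⟩⟩
  obtain ⟨i, hi⟩ := Finset.card_le_one_iff_subset_singleton.mp h
  refine ⟨gdiag n i, Or.inl ⟨i, rfl⟩, gdiag_le.mpr (fun j hj => ?_)⟩
  rw [Nat.one_le_iff_ne_zero]
  intro hz
  exact hj (Finset.mem_singleton.mp (hi (mem_Dset.mpr hz)))

end Part2E


section Part2F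
open SimpleGraph
variable {n : ℕ}

lemma Phi_welldef {T : SimpleGraph (Fin n)} (hn : 2 ≤ n) (a : Expo n)
    (ha : ∃ g ∈ expS n ⊥, g ≤ a) :
    (Phi T a).degree = a.degree ∧ ∃ g ∈ expS n T, g ≤ Phi T a := by
  rcases memBot_struct ha with hc1 | ⟨k, l, hkl, hD, hal⟩
  · rw [Phi_eq_self_of_card_le hc1]
    exact ⟨rfl, memT_gdiag hn hc1⟩
  · by_cases hr : T.Reachable k l
    · rw [Phi_pair_reach hkl hD hr]
      have hW : (theWalk hr).IsPath := theWalk_isPath hr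
      obtain ⟨v1, v2, v3, v4, v5, v6⟩ := sigma_b_values (theWalk hr) hW hkl.ne a
      refine ⟨degree_equivMapDomain _ _, gpath (theWalk hr),
        Or.inr (Or.inr ⟨k, l, theWalk hr, hW, hkl.ne, rfl⟩), ?_⟩
      rw [gpath_le hW]
      constructor
      · intro i hi
        rw [v3 i hi]
        have hnd : i ∉ Dset a := by
          rw [hD]
          intro hmem
          rw [Finset.mem_insert, Finset.mem_singleton] at hmem
          rcases hmem with rfl | rfl
          · exact hi (theWalk hr).start_mem_support
          · exact hi (theWalk hr).end_mem_support
        rw [mem_Dset] at hnd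
        omega
      · intro e he
        obtain ⟨y, hy, hval⟩ := v6 e he
        rw [hval]
        rcases hy with rfl | ⟨v, hvs, hvk, hvl, rfl⟩
        · exact hal
        · have hnd : v ∉ Dset a := by rw [hD]; simp [hvk, hvl]
          rw [mem_Dset] at hnd
          omega
    · rw [Phi_pair_unreach hkl hD hr]
      refine ⟨rfl, gpair n k l, Or.inr (Or.inl ⟨k, l, hkl, hr, rfl⟩), ?_⟩
      rw [gpair_le hkl.ne]
      refine ⟨fun j hjk hjl => ?_, hal⟩
      have hnd : j ∉ Dset a := by rw [hD]; simp [hjk, hjl]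
      rw [mem_Dset] at hnd
      omega

lemma Phi_caseC_facts {T : SimpleGraph (Fin n)} {b : Expo n} {k l : Fin n} (hkl : k < l)
    (hD : Dset b = {k, l}) (hr : T.Reachable k l) :
    k ∈ Dset (Phi T b) ∧ l ∈ Dset (Phi T b) ∧
      (∀ i ∈ Dset (Phi T b), i ∈ (theWalk hr).support) := by
  rw [Phi_pair_reach hkl hD hr]
  obtain ⟨v1, v2, v3, v4, v5, v6⟩ := sigma_b_values (theWalk hr) (theWalk_isPath hr) hkl.ne b
  have hk : k ∈ Dset b := by rw [hD]; simp
  have hl : l ∈ Dset b := by rw [hD]; simp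
  rw [mem_Dset] at hk hl
  refine ⟨mem_Dset.mpr (by rw [v1]; exact hk), mem_Dset.mpr (by rw [v2]; exact hl), ?_⟩
  intro i hi
  by_contra hnot
  rw [mem_Dset, v3 i hnot] at hi
  have hik : i ≠ k := fun hc => hnot (hc ▸ (theWalk hr).start_mem_support)
  have hil : i ≠ l := fun hc => hnot (hc ▸ (theWalk hr).end_mem_support)
  have hnd : i ∉ Dset b := by rw [hD]; simp [hik, hil]
  rw [mem_Dset] at hnd
  exact hnd hi

lemma Phi_inj {T : SimpleGraph (Fin n)} (hT : T.IsAcyclic) {b1 b2 : Expo n}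
    (h1 : ∃ g ∈ expS n ⊥, g ≤ b1) (h2 : ∃ g ∈ expS n ⊥, g ≤ b2)
    (heq : Phi T b1 = Phi T b2) : b1 = b2 := by
  have pairsub : ∀ {b : Expo n} {k l : Fin n}, k ∈ Dset b → l ∈ Dset b → k < l →
      2 ≤ (Dset b).card := by
    intro b k l hk hl hkl
    have hsub : ({k, l} : Finset (Fin n)) ⊆ Dset b := by
      intro x hx
      rw [Finset.mem_insert, Finset.mem_singleton] at hx
      rcases hx with rfl | rfl <;> assumption
    calc 2 = ({k, l} : Finset (Fin n)).card := (pair_card hkl.ne).symm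
      _ ≤ _ := Finset.card_le_card hsub
  rcases memBot_struct h1 with hA1 | ⟨k1, l1, hkl1, hD1, hv1⟩ <;>
    rcases memBot_struct h2 with hA2 | ⟨k2, l2, hkl2, hD2, hv2⟩
  · rwa [Phi_eq_self_of_card_le hA1, Phi_eq_self_of_card_le hA2] at heq
  · by_cases hr2 : T.Reachable k2 l2
    · exfalso
      obtain ⟨hk2, hl2, _⟩ := Phi_caseC_facts hkl2 hD2 hr2
      rw [← heq, Phi_eq_self_of_card_le hA1] at hk2 hl2
      have := pairsub hk2 hl2 hkl2
      omega
    · rwa [Phi_eq_self_of_card_le hA1, Phi_pair_unreach hkl2 hD2 hr2] at heq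
  · by_cases hr1 : T.Reachable k1 l1
    · exfalso
      obtain ⟨hk1, hl1, _⟩ := Phi_caseC_facts hkl1 hD1 hr1
      rw [heq, Phi_eq_self_of_card_le hA2] at hk1 hl1
      have := pairsub hk1 hl1 hkl1
      omega
    · rwa [Phi_pair_unreach hkl1 hD1 hr1, Phi_eq_self_of_card_le hA2] at heq
  · by_cases hr1 : T.Reachable k1 l1 <;> by_cases hr2 : T.Reachable k2 l2
    · -- both reachable
      obtain ⟨hk1, hl1, hcov1⟩ := Phi_caseC_facts hkl1 hD1 hr1
      obtain ⟨hk2, hl2, hcov2⟩ := Phi_caseC_facts hkl2 hD2 hr2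
      rw [heq] at hk1 hl1 hcov1
      have hW1 : (theWalk hr1).IsPath := theWalk_isPath hr1
      have hW2 : (theWalk hr2).IsPath := theWalk_isPath hr2
      have hL1 : (theWalk hr1).length = T.dist k1 l1 := path_length_eq_dist hT _ hW1
      have hL2 : (theWalk hr2).length = T.dist k2 l2 := path_length_eq_dist hT _ hW2
      have hon1 := dist_on_path hT (theWalk hr1) hW1
        (hcov1 k2 hk2) (hcov1 l2 hl2)
      have hon2 := dist_on_path hT (theWalk hr2) hW2 (hcov2 k1 hk1) (hcov2 l1 hl1)
      have hle1 : T.dist k2 l2 ≤ (theWalk hr1).length := hon1.1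
      have hle2 : T.dist k1 l1 ≤ (theWalk hr2).length := hon2.1
      have hlen : T.dist k2 l2 = (theWalk hr1).length := by omega
      rcases hon1.2 hlen with ⟨hek, hel⟩ | ⟨hek, hel⟩
      · subst hek; subst hel
        rw [Phi_pair_reach hkl1 hD1 hr1, Phi_pair_reach hkl1 hD2 hr1] at heq
        have hinj := congrArg (Finsupp.equivMapDomain (sigmaPerm (theWalk hr1))) heq
        rwa [equivMapDomain_sigma_invol _ hW1 hkl1.ne,
          equivMapDomain_sigma_invol _ hW1 hkl1.ne] at hinj
      · exfalso
        subst hek; subst hel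
        exact absurd hkl2 (asymm hkl1)
    · exfalso
      obtain ⟨hk1, hl1, _⟩ := Phi_caseC_facts hkl1 hD1 hr1
      rw [heq, Phi_pair_unreach hkl2 hD2 hr2] at hk1 hl1
      rw [hD2] at hk1 hl1
      obtain ⟨hc1, hc2⟩ := pair_eq_pair hkl2 hkl1 hk1 hl1
      exact hr2 (hc1 ▸ hc2 ▸ hr1)
    · exfalso
      obtain ⟨hk2, hl2, _⟩ := Phi_caseC_facts hkl2 hD2 hr2
      rw [← heq, Phi_pair_unreach hkl1 hD1 hr1] at hk2 hl2
      rw [hD1] at hk2 hl2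
      obtain ⟨hc1, hc2⟩ := pair_eq_pair hkl1 hkl2 hk2 hl2
      exact hr1 (hc1 ▸ hc2 ▸ hr2)
    · rwa [Phi_pair_unreach hkl1 hD1 hr1, Phi_pair_unreach hkl2 hD2 hr2] at heq

lemma surj_core {T : SimpleGraph (Fin n)} (hT : T.IsAcyclic) {k l : Fin n} (hkl : k < l)
    (W0 : T.Walk k l) (hW0 : W0.IsPath) (a : Expo n) (hcov : ∀ x ∈ Dset a, x ∈ W0.support)
    (hk : a s(k,k) = 0) (hl : a s(l,l) = 0) (hedges : ∀ e ∈ W0.edges, 1 ≤ a e) :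
    ∃ b : Expo n, (b.degree = a.degree ∧ ∃ g ∈ expS n ⊥, g ≤ b) ∧ Phi T b = a := by
  obtain ⟨v1, v2, v3, v4, v5, v6⟩ := sigma_b_values W0 hW0 hkl.ne a
  have hDb : Dset (Finsupp.equivMapDomain (sigmaPerm W0) a) = {k, l} := by
    ext i
    rw [mem_Dset, Finset.mem_insert, Finset.mem_singleton]
    constructor
    · intro hz
      by_contra hne
      push_neg at hne
      by_cases his : i ∈ W0.support
      · obtain ⟨e, he, hval⟩ := v4 i his hne.1 hne.2
        rw [hval] at hz
        have := hedges e he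
        omega
      · rw [v3 i his] at hz
        exact his (hcov i (mem_Dset.mpr hz))
    · rintro (rfl | rfl)
      · rw [v1]; exact hk
      · rw [v2]; exact hl
  have hbkl : 1 ≤ (Finsupp.equivMapDomain (sigmaPerm W0) a) s(k,l) := by
    obtain ⟨e, he, hval⟩ := v5
    rw [hval]
    exact hedges e he
  have hr : T.Reachable k l := ⟨W0⟩
  refine ⟨Finsupp.equivMapDomain (sigmaPerm W0) a, ⟨degree_equivMapDomain _ _, gpair n k l,
      Or.inr (Or.inl ⟨k, l, hkl, by rw [SimpleGraph.reachable_bot]; exact hkl.ne, rfl⟩), ?_⟩, ?_⟩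
  · rw [gpair_le hkl.ne]
    refine ⟨fun j hjk hjl => ?_, hbkl⟩
    have hnd : j ∉ Dset (Finsupp.equivMapDomain (sigmaPerm W0) a) := by
      rw [hDb]; simp [hjk, hjl]
    rw [mem_Dset] at hnd
    omega
  · rw [Phi_pair_reach hkl hDb hr]
    have hWeq : W0 = theWalk hr := theWalk_eq hT hr W0 hW0
    rw [← hWeq, equivMapDomain_sigma_invol W0 hW0 hkl.ne]

lemma Phi_surj {T : SimpleGraph (Fin n)} (hT : T.IsAcyclic) (hn : 2 ≤ n) (a : Expo n)
    (ha : ∃ g ∈ expS n T, g ≤ a) :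
    ∃ b : Expo n, (b.degree = a.degree ∧ ∃ g ∈ expS n ⊥, g ≤ b) ∧ Phi T b = a := by
  obtain ⟨g, hg, hle⟩ := ha
  rcases hg with ⟨i, rfl⟩ | ⟨k, l, hkl, hnr, rfl⟩ | ⟨k0, l0, p, hp, hne0, rfl⟩
  · have hsub : Dset a ⊆ {i} := by
      intro j hj
      rw [mem_Dset] at hj
      rw [Finset.mem_singleton]
      by_contra hji
      have := gdiag_le.mp hle j hji
      omega
    have hcard : (Dset a).card ≤ 1 :=
      le_trans (Finset.card_le_card hsub) (by simp)
    exact ⟨a, ⟨rfl, memBot_gdiag hn hcard⟩, Phi_eq_self_of_card_le hcard⟩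
  · obtain ⟨hdiag, hoff⟩ := (gpair_le hkl.ne).mp hle
    by_cases hcard : (Dset a).card ≤ 1
    · exact ⟨a, ⟨rfl, memBot_gdiag hn hcard⟩, Phi_eq_self_of_card_le hcard⟩
    · have hsub : Dset a ⊆ {k, l} := by
        intro j hj
        rw [mem_Dset] at hj
        by_contra hjm
        rw [Finset.mem_insert, Finset.mem_singleton] at hjm
        push_neg at hjm
        have := hdiag j hjm.1 hjm.2
        omega
      have hD : Dset a = {k, l} := Finset.eq_of_subset_of_card_le hsub
        (by rw [pair_card hkl.ne]; omega)
      exact ⟨a, ⟨rfl, gpair n k l,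
        Or.inr (Or.inl ⟨k, l, hkl, by rw [SimpleGraph.reachable_bot]; exact hkl.ne, rfl⟩), hle⟩,
        Phi_pair_unreach hkl hD hnr⟩
  · obtain ⟨hdiag, hedge⟩ := (gpath_le hp).mp hle
    have hsub : ∀ x ∈ Dset a, x ∈ p.support := by
      intro x hx
      rw [mem_Dset] at hx
      by_contra hxs
      have := hdiag x hxs
      omega
    by_cases hcard : (Dset a).card ≤ 1
    · exact ⟨a, ⟨rfl, memBot_gdiag hn hcard⟩, Phi_eq_self_of_card_le hcard⟩
    · obtain ⟨u, v, q, hq, huv, hu, hv, hcov, hedges⟩ :=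
        trim_both p hp (Dset a) hsub (by omega)
      have hedges' : ∀ e ∈ q.edges, 1 ≤ a e := fun e he => hedge e (hedges e he)
      rcases lt_or_gt_of_ne huv with hlt | hgt
      · exact surj_core hT hlt q hq a hcov (mem_Dset.mp hu) (mem_Dset.mp hv) hedges'
      · refine surj_core hT hgt q.reverse hq.reverse a (fun x hx => ?_)
          (mem_Dset.mp hv) (mem_Dset.mp hu) (fun e he => ?_)
        · rw [SimpleGraph.Walk.support_reverse, List.mem_reverse]
          exact hcov x hx
        · rw [SimpleGraph.Walk.edges_reverse, List.mem_reverse] at he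
          exact hedges' e he

theorem card_main (hn : 2 ≤ n) (T : SimpleGraph (Fin n)) (hT : T.IsAcyclic) (d : ℕ) :
    Nat.card {a : Expo n // a.degree = d ∧ ∃ g ∈ expS n ⊥, g ≤ a}
      = Nat.card {a : Expo n // a.degree = d ∧ ∃ g ∈ expS n T, g ≤ a} := by
  apply Nat.card_eq_of_bijective (fun b =>
    (⟨Phi T b.1, by
      obtain ⟨hdeg, hmem⟩ := Phi_welldef (T := T) hn b.1 b.2.2
      exact ⟨hdeg.trans b.2.1, hmem⟩⟩ :
      {a : Expo n // a.degree = d ∧ ∃ g ∈ expS n T, g ≤ a}))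
  constructor
  · intro b1 b2 h
    apply Subtype.ext
    exact Phi_inj hT b1.2.2 b2.2.2 (congrArg Subtype.val h)
  · intro a
    obtain ⟨b, ⟨hdeg, hmem⟩, hphi⟩ := Phi_surj hT hn a.1 a.2.2
    exact ⟨⟨b, hdeg.trans a.2.1, hmem⟩, Subtype.ext hphi⟩

end Part2F


/-- For every forest `T` on `[n]`, the ideal `I_T` has the same Hilbert function as the
ideal `I` (which is the special case of `I_T` for the forest with no edges). -/
theorem hilbertFunction_forestIdeal_eq
    (K : Type*) [Field K] (n : ℕ) (hn : 2 ≤ n) (T : SimpleGraph (Fin n))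
    (hT : T.IsAcyclic) (d : ℕ) :
    idealComponentDim K (forestIdeal K n ⊥) d = idealComponentDim K (forestIdeal K n T) d := by
  rw [forestIdeal_eq n (⊥ : SimpleGraph (Fin n)), forestIdeal_eq n T,
    idealComponentDim_eq_card K (expS n ⊥) d, idealComponentDim_eq_card K (expS n T) d]
  exact card_main hn T hT d
end

section
/- For all 1 ≤ k < l ≤ n, the following cofactor expansion holds in R: (−1)^{k+l}·det((X_G)_{[n]∖{k}, [n]∖{l}}) = Σ_p (−1)^{|V(p)|−1}·det((X_G)_{[n]∖V(p), [n]∖V(p)})·x_p, where the sum runs over all paths p in G between k and l, (X_G)_{A,B} denotes the submatrix of X_G with row indices A and column indices B (in increasing order), a path contains at least one edge and no repeated vertex, V(p) is the vertex set of p, and x_p := ∏_{ij ∈ p} x_{ij}. -/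
open MvPolynomial
open scoped Classical

/-- The sparse generic symmetric `n × n` matrix `X_G` associated to a simple graph `G`
on `[n]`: its `(i,j)` entry is the variable `x_{ij}` if `i = j` or `ij` is an edge of `G`,
and `0` otherwise (i.e. all variables in `Z` are replaced by `0`). -/
noncomputable def sparseGenericSym (K : Type*) [Field K] (n : ℕ) (G : SimpleGraph (Fin n)) :
    Matrix (Fin n) (Fin n) (SymPolyRing K n) :=
  fun i j => if i = j ∨ G.Adj i j then MvPolynomial.X s(i, j) else 0

/-- The increasing embedding `Fin (n-1) → Fin n` that avoids `k`; composing a matrix with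
it on rows (resp. columns) deletes the `k`-th row (resp. column), keeping the remaining
indices in increasing order. -/
def dropIdx {n : ℕ} (hn : 2 ≤ n) (k : Fin n) : Fin (n - 1) → Fin n :=
  fun i => Fin.cast (by omega : n - 1 + 1 = n)
    ((Fin.cast (by omega : n = n - 1 + 1) k).succAbove i)

/-- The principal minor `det (M_{s,s})` of a square matrix `M` on a subset `s` of its
index set (rows and columns taken in increasing order). -/
noncomputable def principalMinorOn {R : Type*} [CommRing R] {n : ℕ}
    (M : Matrix (Fin n) (Fin n) R) (s : Finset (Fin n)) : R :=
  (M.submatrix (fun i : {x : Fin n // x ∈ s} => (i : Fin n))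
    (fun i : {x : Fin n // x ∈ s} => (i : Fin n))).det

namespace CofAux

open Equiv Equiv.Perm Finset List

variable {V : Type*} [DecidableEq V]

def mkWalk {G : SimpleGraph V} :
    ∀ (L : List V) (h : L ≠ []), L.Chain' G.Adj → G.Walk (L.head h) (L.getLast h)
  | [_], _, _ => SimpleGraph.Walk.nil
  | _ :: b :: t, _, h =>
    SimpleGraph.Walk.cons (List.isChain_cons_cons.mp h).1
      (mkWalk (b :: t) (by simp) (List.isChain_cons_cons.mp h).2)

lemma support_mkWalk {G : SimpleGraph V} :
    ∀ (L : List V) (h : L ≠ []) (hc : L.Chain' G.Adj), (mkWalk L h hc).support = L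
  | [_], _, _ => rfl
  | _ :: b :: t, _, h => by
    exact congrArg (List.cons _) (support_mkWalk (b :: t) (by simp) _)

lemma walk_eq_of_support_eq {G : SimpleGraph V} {a b : V} (w w' : G.Walk a b)
    (h : w.support = w'.support) : w = w' := by
  induction w with
  | nil =>
    cases w' with
    | nil => rfl
    | cons h' q =>
      exfalso
      rw [SimpleGraph.Walk.support_nil, SimpleGraph.Walk.support_cons] at h
      exact q.support_ne_nil (by simpa using h)
  | cons ha q ih =>
    cases w' with
    | nil =>
      exfalso
      rw [SimpleGraph.Walk.support_nil, SimpleGraph.Walk.support_cons] at h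
      exact q.support_ne_nil (by simpa using h.symm)
    | cons ha' q' =>
      rw [SimpleGraph.Walk.support_cons, SimpleGraph.Walk.support_cons] at h
      have h2 : q.support = q'.support := by simpa using h
      have hv : _ = _ := congrArg (List.head?) h2
      rw [q.support_eq_cons, q'.support_eq_cons] at hv
      simp only [List.head?_cons, Option.some.injEq] at hv
      subst hv
      rw [ih q' h2]

lemma support_getLast? {G : SimpleGraph V} {a b : V} (w : G.Walk a b) :
    w.support.getLast? = some b := by
  induction w with
  | nil => rfl
  | cons ha q ih =>
    rw [SimpleGraph.Walk.support_cons]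
    conv_lhs => rw [q.support_eq_cons]
    rw [List.getLast?_cons_cons, ← q.support_eq_cons]
    exact ih

lemma support_getLast {G : SimpleGraph V} {a b : V} (w : G.Walk a b) (h) :
    w.support.getLast h = b := by
  have h1 := support_getLast? w
  rw [List.getLast?_eq_getLast h] at h1
  exact Option.some_injective _ h1

lemma edges_zip {G : SimpleGraph V} {a b : V} (w : G.Walk a b) :
    w.edges = List.zipWith (fun x y => s(x, y)) w.support w.support.tail := by
  induction w with
  | nil => rfl
  | cons ha q ih =>
    rw [SimpleGraph.Walk.edges_cons, SimpleGraph.Walk.support_cons, ih, q.support_eq_cons]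
    simp [List.zipWith]
    conv_rhs => rw [q.support_eq_cons]
    rw [List.zipWith_cons_cons, ← q.support_eq_cons]

lemma formPerm_getLast_head (L : List V) (hL : L.Nodup) (h2 : 2 ≤ L.length) (hne : L ≠ []) :
    L.formPerm (L.getLast hne) = L.head hne := by
  have hlen : 0 < L.length := by omega
  rw [List.getLast_eq_getElem, List.formPerm_apply_getElem _ hL _ (by omega)]
  have : (L.length - 1 + 1) % L.length = 0 := by
    rw [Nat.sub_add_cancel (by omega), Nat.mod_self]
  simp only [this]
  exact List.getElem_zero hlen

lemma prod_zip {R : Type*} [CommRing R] (f : V → V → R) (L : List V) (hL : L.Nodup) :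
    ∏ i ∈ L.dropLast.toFinset, f i (L.formPerm i) = (List.zipWith f L L.tail).prod := by
  rw [List.prod_toFinset _ (hL.sublist (List.dropLast_sublist L))]
  congr 1
  apply List.ext_getElem
  · simp [List.length_zipWith, List.length_dropLast]
  · intro j h1 h2
    have hlen : j + 1 < L.length := by
      simp [List.length_dropLast] at h1; omega
    rw [List.getElem_map, List.getElem_dropLast, List.getElem_zipWith,
      List.getElem_tail, List.formPerm_apply_getElem _ hL _ (by omega)]
    simp [Nat.mod_eq_of_lt hlen]

lemma dropLast_toFinset_eq (L : List V) (hL : L.Nodup) (hne : L ≠ []) :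
    L.dropLast.toFinset = L.toFinset.erase (L.getLast hne) := by
  have hsplit : L.dropLast ++ [L.getLast hne] = L := List.dropLast_append_getLast hne
  ext x
  simp only [List.mem_toFinset, Finset.mem_erase]
  constructor
  · intro hx
    refine ⟨?_, List.mem_of_mem_dropLast hx⟩
    intro hxl
    have hnd : (L.dropLast ++ [L.getLast hne]).Nodup := by rw [hsplit]; exact hL
    rw [List.nodup_append] at hnd
    exact hnd.2.2 x hx x (by simp [hxl]) rfl
  · intro ⟨hxl, hx⟩
    rw [← hsplit] at hx
    rcases List.mem_append.mp hx with h | h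
    · exact h
    · simp at h; exact absurd h hxl

lemma det_updateRow_single {m : Type*} [Fintype m] [DecidableEq m] {R : Type*} [CommRing R]
    (M : Matrix m m R) (k l : m) :
    (M.updateRow k (Pi.single l 1)).det
      = ∑ σ ∈ Finset.univ.filter fun σ : Equiv.Perm m => σ l = k,
          ((Equiv.Perm.sign σ : ℤ) : R) * ∏ i ∈ Finset.univ.erase l, M (σ i) i := by
  rw [Matrix.det_apply,
    ← Finset.sum_filter_add_sum_filter_not Finset.univ (fun σ : Equiv.Perm m => σ l = k)]
  have h2 : ∀ σ ∈ Finset.univ.filter fun σ : Equiv.Perm m => ¬σ l = k,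
      (Equiv.Perm.sign σ • ∏ i, (M.updateRow k (Pi.single l 1)) (σ i) i) = 0 := by
    intro σ hσ
    rw [Finset.mem_filter] at hσ
    have hzero : (M.updateRow k (Pi.single l 1)) (σ (σ⁻¹ k)) (σ⁻¹ k) = 0 := by
      rw [Equiv.Perm.inv_def, Equiv.apply_symm_apply, Matrix.updateRow_self,
        Pi.single_eq_of_ne (fun h => hσ.2 (by rw [← h, Equiv.apply_symm_apply]))]
    rw [show (∏ i, (M.updateRow k (Pi.single l 1)) (σ i) i) = 0 from
      Finset.prod_eq_zero (Finset.mem_univ (σ⁻¹ k)) hzero, smul_zero]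
  rw [Finset.sum_eq_zero h2, add_zero]
  refine Finset.sum_congr rfl fun σ hσ => ?_
  rw [Finset.mem_filter] at hσ
  have hσl : σ l = k := hσ.2
  have hprod : ∏ i, (M.updateRow k (Pi.single l 1)) (σ i) i
      = ∏ i ∈ Finset.univ.erase l, M (σ i) i := by
    rw [← Finset.mul_prod_erase Finset.univ _ (Finset.mem_univ l), hσl,
      Matrix.updateRow_self, Pi.single_eq_same, one_mul]
    refine Finset.prod_congr rfl fun i hi => ?_
    have : σ i ≠ k := by
      rw [← hσl]
      exact fun h => (Finset.mem_erase.mp hi).1 (σ.injective h)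
    rw [Matrix.updateRow_ne this]
  rw [hprod, Units.smul_def, zsmul_eq_mul]

lemma minor_sum {R : Type*} [CommRing R] {N : ℕ} (M : Matrix (Fin N) (Fin N) R)
    (s : Finset (Fin N)) :
    (M.submatrix (fun i : {x : Fin N // x ∈ s} => (i : Fin N))
        (fun i : {x : Fin N // x ∈ s} => (i : Fin N))).det
      = ∑ τ ∈ Finset.univ.filter fun τ : Equiv.Perm (Fin N) => ∀ x ∉ s, τ x = x,
          ((Equiv.Perm.sign τ : ℤ) : R) * ∏ i ∈ s, M (τ i) i := by
  rw [Matrix.det_apply]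
  refine Finset.sum_bij (fun τ' _ => Equiv.Perm.ofSubtype τ') ?_ ?_ ?_ ?_
  · intro τ' _
    simp only [Finset.mem_filter, Finset.mem_univ, true_and]
    exact fun x hx => Equiv.Perm.ofSubtype_apply_of_not_mem τ' hx
  · intro a _ b _ hab
    have h1 : Function.Injective (Equiv.Perm.ofSubtype :
        Equiv.Perm {x : Fin N // x ∈ s} → Equiv.Perm (Fin N)) := fun f g hfg => by
      rw [← Equiv.Perm.subtypePerm_ofSubtype f, ← Equiv.Perm.subtypePerm_ofSubtype g]
      simp only [hfg]
    exact h1 hab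
  · intro τ hτ
    rw [Finset.mem_filter] at hτ
    have hiff : ∀ x : Fin N, x ∈ s ↔ τ x ∈ s := by
      intro x
      constructor
      · intro hx
        by_contra hnx
        have h2 : τ (τ x) = τ x := hτ.2 _ hnx
        have := τ.injective h2
        rw [this] at hnx
        exact hnx hx
      · intro hx
        by_contra hnx
        rw [hτ.2 x hnx] at hx
        exact hnx hx
    refine ⟨τ.subtypePerm (fun x => (hiff x).symm), Finset.mem_univ _, ?_⟩
    exact Equiv.Perm.ofSubtype_subtypePerm (fun x => (hiff x).symm)
      (fun x hx => by by_contra hnx; exact hx (hτ.2 x hnx))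
  · intro τ' _
    rw [Units.smul_def, zsmul_eq_mul, Equiv.Perm.sign_ofSubtype]
    have hpr : (∏ x : {x : Fin N // x ∈ s}, (M.submatrix
          (fun i : {x : Fin N // x ∈ s} => (i : Fin N))
          (fun i : {x : Fin N // x ∈ s} => (i : Fin N))) (τ' x) x)
        = ∏ i ∈ s, M (Equiv.Perm.ofSubtype τ' i) i := by
      rw [← Finset.prod_coe_sort s (fun i => M (Equiv.Perm.ofSubtype τ' i) i)]
      refine Finset.prod_congr rfl fun x _ => ?_
      rw [Matrix.submatrix_apply]
      congr 1
      exact (Equiv.Perm.ofSubtype_apply_coe τ' x).symm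
    rw [hpr]

end CofAux

namespace CofAux

open Equiv Equiv.Perm Finset List

section PathStuff

variable {K : Type*} [Field K] {n : ℕ} {G : SimpleGraph (Fin n)} [DecidableRel G.Adj]
  {k l : Fin n}

lemma symA (K : Type*) [Field K] (n : ℕ) (G : SimpleGraph (Fin n)) [DecidableRel G.Adj]
    (i j : Fin n) : sparseGenericSym K n G i j = sparseGenericSym K n G j i := by
  unfold sparseGenericSym
  by_cases h : i = j ∨ G.Adj i j
  · rw [if_pos h, if_pos (by rcases h with h | h; exacts [Or.inl h.symm, Or.inr h.symm])]
    rw [Sym2.eq_swap]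
  · rw [if_neg h, if_neg
      (fun hc => h (by rcases hc with h' | h'; exacts [Or.inl h'.symm, Or.inr h'.symm]))]

lemma path_two_le (hkl : k ≠ l) (p : G.Path k l) : 2 ≤ p.1.support.length := by
  rw [SimpleGraph.Walk.length_support]
  by_contra h
  push_neg at h
  have h0 : p.1.length = 0 := by omega
  exact hkl (SimpleGraph.Walk.eq_of_length_eq_zero h0)

lemma path_head (p : G.Path k l) : p.1.support.head p.1.support_ne_nil = k := by
  have h1 := congrArg List.head? p.1.support_eq_cons
  rw [List.head?_cons, List.head?_eq_head p.1.support_ne_nil] at h1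
  exact Option.some_injective _ h1

lemma toList_path (hkl : k ≠ l) (p : G.Path k l) (τ : Equiv.Perm (Fin n))
    (hτ : ∀ x ∈ p.1.support, τ x = x) :
    Equiv.Perm.toList (p.1.support.formPerm * τ) k = p.1.support := by
  set L := p.1.support with hL
  have hnd : L.Nodup := p.2.support_nodup
  have hlen2 : 2 ≤ L.length := path_two_le hkl p
  have hne : L ≠ [] := p.1.support_ne_nil
  have hkmem : k ∈ L := p.1.start_mem_support
  set c := L.formPerm with hc
  have hdisj : c.Disjoint τ := fun x => by
    by_cases hx : x ∈ L
    · exact Or.inr (hτ x hx)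
    · exact Or.inl (List.formPerm_apply_of_notMem hx)
  have hcomm : Commute c τ := hdisj.commute
  have hcyc0 : (c * τ).cycleOf k = c.cycleOf k :=
    Equiv.Perm.cycleOf_mul_of_apply_right_eq_self hcomm k (hτ k hkmem)
  have hτpow : ∀ i : ℕ, (τ ^ i) k = k := by
    intro i; induction i with
    | zero => rfl
    | succ m ih => rw [pow_succ, Equiv.Perm.mul_apply, hτ k hkmem, ih]
  have hfun : (fun i : ℕ => ((c * τ) ^ i) k) = fun i : ℕ => (c ^ i) k := by
    funext i
    rw [hcomm.mul_pow, Equiv.Perm.mul_apply, hτpow i]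
  have hget0 : L.get ⟨0, by omega⟩ = k := by
    have : L.get ⟨0, by omega⟩ = L.head hne := by
      rw [List.get_eq_getElem, List.getElem_zero]
    rw [this, path_head p]
  have htl : Equiv.Perm.toList c k = L := by
    have h2 := Equiv.Perm.toList_formPerm_nontrivial L hlen2 hnd
    rwa [hget0] at h2
  rw [← htl]
  simp only [Equiv.Perm.toList, hcyc0, hfun]
  apply List.ext_getElem (by simp)
  intro j _ _
  rw [List.getElem_iterate, List.getElem_iterate, ← Equiv.Perm.coe_pow, ← Equiv.Perm.coe_pow]
  exact congrFun hfun j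

lemma exists_path_of_admissible (hkl : k ≠ l) (σ : Equiv.Perm (Fin n)) (hσl : σ l = k)
    (hstep : ∀ i : Fin n, i ≠ l → i = σ i ∨ G.Adj i (σ i)) :
    ∃ (p : G.Path k l) (τ : Equiv.Perm (Fin n)),
      (∀ x ∈ p.1.support, τ x = x) ∧ p.1.support.formPerm * τ = σ := by
  have hks : σ k ≠ k := fun h => hkl (σ.injective (h.trans hσl.symm))
  set L := σ.toList k with hLdef
  have hlen : L.length = (σ.cycleOf k).support.card := Equiv.Perm.length_toList σ k
  have hlen2 : 2 ≤ L.length := by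
    rw [hlen]; exact Equiv.Perm.two_le_card_support_cycleOf_iff.mpr hks
  have hne : L ≠ [] := by
    intro h; rw [h] at hlen2; simp at hlen2
  have hnd : L.Nodup := Equiv.Perm.nodup_toList σ k
  have hform : L.formPerm = σ.cycleOf k := Equiv.Perm.formPerm_toList σ k
  have hgetE : ∀ (j : ℕ) (hj : j < L.length), L[j] = (σ ^ j) k := by
    intro j hj
    simp [hLdef, Equiv.Perm.toList]
    rw [← Equiv.Perm.coe_pow]
  have hhead : L.head hne = k := by
    rw [← List.getElem_zero (by omega), hgetE 0 (by omega), pow_zero]; rfl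
  have hmemL : ∀ x ∈ L, σ.SameCycle k x := fun x hx =>
    (Equiv.Perm.mem_toList_iff.mp hx).1
  have hlast : L.getLast hne = l := by
    have h1 : L.formPerm (L.getLast hne) = L.head hne := formPerm_getLast_head L hnd hlen2 hne
    rw [hform, hhead] at h1
    have h2 : σ.SameCycle k (L.getLast hne) := hmemL _ (List.getLast_mem hne)
    rw [h2.cycleOf_apply] at h1
    exact σ.injective (h1.trans hσl.symm)
  have hchain : L.Chain' G.Adj := by
    show List.IsChain G.Adj L
    rw [List.isChain_iff_getElem]
    intro i hi
    have hi1 : i + 1 < L.length := by omega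
    have hi0 : i < L.length := by omega
    have hsucc : L[i + 1] = σ (L[i]'hi0) := by
      rw [hgetE _ hi1, hgetE _ hi0, pow_succ', Equiv.Perm.mul_apply]
    have hxl : L[i]'hi0 ≠ l := by
      intro h
      have hgl : L[i]'hi0 = L.getLast hne := by rw [h, hlast]
      rw [List.getLast_eq_getElem] at hgl
      rw [hnd.getElem_inj_iff] at hgl
      omega
    rcases hstep (L[i]'hi0) hxl with h | h
    · exfalso
      have : L[i]'hi0 = L[i + 1] := by rw [hsucc, ← h]
      rw [hnd.getElem_inj_iff] at this
      omega
    · rw [hsucc]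
      exact h
  refine ⟨⟨(mkWalk L hne hchain).copy hhead hlast, ?_⟩, L.formPerm⁻¹ * σ, ?_, ?_⟩
  · exact SimpleGraph.Walk.IsPath.mk'
      (by rw [SimpleGraph.Walk.support_copy, support_mkWalk]; exact hnd)
  · intro x hx
    have hxL : x ∈ L := by
      rwa [SimpleGraph.Walk.support_copy, support_mkWalk] at hx
    have hsc : σ.SameCycle k x := hmemL x hxL
    rw [Equiv.Perm.mul_apply, hform]
    rw [← hsc.cycleOf_apply, Equiv.Perm.inv_def, Equiv.symm_apply_apply]
  · have hs : ((mkWalk L hne hchain).copy hhead hlast).support = L := by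
      rw [SimpleGraph.Walk.support_copy, support_mkWalk]
    show ((mkWalk L hne hchain).copy hhead hlast).support.formPerm * (L.formPerm⁻¹ * σ) = σ
    rw [hs]
    exact mul_inv_cancel_left _ _

end PathStuff

end CofAux

section
open Equiv Equiv.Perm Finset List CofAux

variable {K : Type*} [Field K] {n : ℕ} {G : SimpleGraph (Fin n)} [DecidableRel G.Adj]
  {k l : Fin n}

lemma CofAux.value_eq (K : Type*) [Field K] (hkl : k ≠ l) (p : G.Path k l)
    (τ : Equiv.Perm (Fin n)) (hτ : ∀ x ∈ p.1.support, τ x = x) :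
    ((Equiv.Perm.sign (p.1.support.formPerm * τ) : ℤ) : SymPolyRing K n)
        * ∏ i ∈ Finset.univ.erase l,
            sparseGenericSym K n G i ((p.1.support.formPerm * τ) i)
      = (-1 : SymPolyRing K n) ^ (p.1.support.length - 1)
        * (((Equiv.Perm.sign τ : ℤ) : SymPolyRing K n)
            * ∏ i ∈ Finset.univ \ p.1.support.toFinset, sparseGenericSym K n G i (τ i))
        * (p.1.edges.map fun e => (MvPolynomial.X e : SymPolyRing K n)).prod := by
  set A := sparseGenericSym K n G with hA
  set L := p.1.support with hL
  have hnd : L.Nodup := p.2.support_nodup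
  have hlen2 : 2 ≤ L.length := path_two_le hkl p
  have hne : L ≠ [] := p.1.support_ne_nil
  have hkmem : k ∈ L := p.1.start_mem_support
  have hlmem : l ∈ L := p.1.end_mem_support
  have hlast : L.getLast hne = l := support_getLast p.1 hne
  set c := L.formPerm with hc
  -- τ preserves the complement of L
  have hτ_pres : ∀ x, x ∉ L → τ x ∉ L := by
    intro x hx hmem
    have h2 : τ (τ x) = τ x := hτ _ hmem
    have h3 := τ.injective h2
    rw [h3] at hmem
    exact hx hmem
  -- index set split
  have hsplit : Finset.univ.erase l = (L.toFinset.erase l) ∪ (Finset.univ \ L.toFinset) := by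
    ext x
    simp only [Finset.mem_erase, Finset.mem_union, Finset.mem_univ, and_true, true_and,
      Finset.mem_sdiff, List.mem_toFinset]
    constructor
    · intro hx
      by_cases hxL : x ∈ L
      · exact Or.inl ⟨hx, hxL⟩
      · exact Or.inr hxL
    · rintro (⟨hx, _⟩ | hx)
      · exact hx
      · exact fun h => hx (h ▸ hlmem)
  have hdisj2 : Disjoint (L.toFinset.erase l) (Finset.univ \ L.toFinset) := by
    rw [Finset.disjoint_left]
    intro x hx hx2
    rw [Finset.mem_sdiff] at hx2
    exact hx2.2 (Finset.mem_of_mem_erase hx)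
  -- first part of the product: the path edges
  have hpart1 : ∏ i ∈ L.toFinset.erase l, A i ((c * τ) i)
      = (p.1.edges.map fun e => (MvPolynomial.X e : SymPolyRing K n)).prod := by
    have step1 : ∏ i ∈ L.toFinset.erase l, A i ((c * τ) i)
        = ∏ i ∈ L.toFinset.erase l, A i (c i) := by
      refine Finset.prod_congr rfl fun i hi => ?_
      have hiL : i ∈ L := List.mem_toFinset.mp (Finset.mem_of_mem_erase hi)
      rw [Equiv.Perm.mul_apply, hτ i hiL]
    rw [step1, show L.toFinset.erase l = L.dropLast.toFinset from by
      rw [dropLast_toFinset_eq L hnd hne, hlast], prod_zip (fun i j => A i j) L hnd]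
    rw [edges_zip p.1, List.map_zipWith]
    congr 1
    apply List.ext_getElem (by simp [hL, SimpleGraph.Walk.length_support])
    intro j h1 h2
    have hj1 : j + 1 < L.length := by
      simp [List.length_zipWith] at h1
      omega
    rw [List.getElem_zipWith, List.getElem_zipWith, List.getElem_tail]
    have hchain := p.1.isChain_adj_support
    rw [List.isChain_iff_getElem] at hchain
    have hb : j < (↑p : G.Walk k l).support.length - 1 := Nat.lt_sub_of_add_lt hj1
    have hadj : G.Adj (L[j]'(by omega)) (L[j + 1]'hj1) := by
      have h3 := hchain j hj1
      exact h3
    exact if_pos (Or.inr hadj)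
  -- second part: the complement
  have hpart2 : ∏ i ∈ Finset.univ \ L.toFinset, A i ((c * τ) i)
      = ∏ i ∈ Finset.univ \ L.toFinset, A i (τ i) := by
    refine Finset.prod_congr rfl fun i hi => ?_
    rw [Finset.mem_sdiff, List.mem_toFinset] at hi
    rw [Equiv.Perm.mul_apply, hc, List.formPerm_apply_of_notMem (hτ_pres i hi.2)]
  -- the sign of the cycle
  have hsignc : ((Equiv.Perm.sign c : ℤ) : SymPolyRing K n)
      = (-1 : SymPolyRing K n) ^ (L.length - 1) := by
    have hcyc : c.IsCycle := List.isCycle_formPerm hnd hlen2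
    have hsupp : c.support = L.toFinset :=
      List.support_formPerm_of_nodup L hnd
        (fun x hx => by rw [hx] at hlen2; simp at hlen2)
    have hsign := hcyc.sign
    rw [hsupp, List.card_toFinset, List.dedup_eq_self.mpr hnd] at hsign
    rw [hsign]
    have hLL : L.length = (L.length - 1) + 1 := by omega
    push_cast
    conv_lhs => rw [hLL]
    rw [pow_succ]
    ring
  -- put everything together
  rw [hsplit, Finset.prod_union hdisj2, hpart1, hpart2, map_mul]
  push_cast
  rw [hsignc]
  ring

end


section Main
open Equiv Equiv.Perm Finset List CofAux

/-- The cofactor expansion of the submaximal minors of the sparse generic symmetric matrix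
`X_G` in terms of paths: for all `k < l`,
`(−1)^{k+l}·det((X_G)_{[n]∖k,[n]∖l})
  = Σ_p (−1)^{|V(p)|−1}·det((X_G)_{[n]∖V(p),[n]∖V(p)})·x_p`,
the sum being over all paths `p` in `G` between `k` and `l`. -/
theorem cofactor_sparse_symmetric_path_sum
    (K : Type*) [Field K] (n : ℕ) (hn : 2 ≤ n) (G : SimpleGraph (Fin n))
    [DecidableRel G.Adj] (k l : Fin n) (hkl : k < l) :
    (-1 : SymPolyRing K n) ^ ((k : ℕ) + (l : ℕ)) *
        ((sparseGenericSym K n G).submatrix (dropIdx hn k) (dropIdx hn l)).det =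
      ∑ p : G.Path k l,
        (-1 : SymPolyRing K n) ^ (p.1.support.length - 1) *
          principalMinorOn (sparseGenericSym K n G) (Finset.univ \ p.1.support.toFinset) *
          (p.1.edges.map fun e => (MvPolynomial.X e : SymPolyRing K n)).prod := by
  classical
  have hkl_ne : k ≠ l := Fin.ne_of_lt hkl
  set A := sparseGenericSym K n G with hA
  have h1 : n - 1 + 1 = n := by omega
  set e : Fin n ≃ Fin (n - 1 + 1) := finCongr h1.symm with he
  have hsub : A.submatrix (dropIdx hn k) (dropIdx hn l)
      = (Matrix.reindex e e A).submatrix (e k).succAbove (e l).succAbove := rfl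
  have hstep1 : (-1 : SymPolyRing K n) ^ ((k : ℕ) + (l : ℕ)) *
      (A.submatrix (dropIdx hn k) (dropIdx hn l)).det = A.adjugate l k := by
    rw [hsub]
    have hadj := Matrix.adjugate_fin_succ_eq_det_submatrix (Matrix.reindex e e A) (e l) (e k)
    have hval : ((e k : Fin (n - 1 + 1)) : ℕ) = (k : ℕ) := by simp [he]
    have hval2 : ((e l : Fin (n - 1 + 1)) : ℕ) = (l : ℕ) := by simp [he]
    have h2 : Matrix.adjugate (Matrix.reindex e e A) (e l) (e k) = A.adjugate l k := by
      rw [Matrix.adjugate_reindex]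
      simp [Matrix.reindex_apply, he]
    rw [← h2, hadj, hval, hval2]
  rw [hstep1, Matrix.adjugate_apply, det_updateRow_single]
  have hrow : ∀ σ : Equiv.Perm (Fin n),
      ∏ i ∈ Finset.univ.erase l, A (σ i) i = ∏ i ∈ Finset.univ.erase l, A i (σ i) :=
    fun σ => Finset.prod_congr rfl fun i _ => symA K n G (σ i) i
  rw [show (∑ σ ∈ Finset.univ.filter fun σ : Equiv.Perm (Fin n) => σ l = k,
        ((Equiv.Perm.sign σ : ℤ) : SymPolyRing K n) * ∏ i ∈ Finset.univ.erase l, A (σ i) i)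
      = ∑ σ ∈ Finset.univ.filter fun σ : Equiv.Perm (Fin n) => σ l = k,
        ((Equiv.Perm.sign σ : ℤ) : SymPolyRing K n) * ∏ i ∈ Finset.univ.erase l, A i (σ i)
    from Finset.sum_congr rfl fun σ _ => by rw [hrow σ]]
  set T : G.Path k l → Finset (Equiv.Perm (Fin n)) :=
    fun p => Finset.univ.filter (fun τ => ∀ x ∈ p.1.support, τ x = x) with hT
  set g : Equiv.Perm (Fin n) → SymPolyRing K n :=
    fun σ => ((Equiv.Perm.sign σ : ℤ) : SymPolyRing K n)
      * ∏ i ∈ Finset.univ.erase l, A i (σ i) with hg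
  set S' : Finset (Equiv.Perm (Fin n)) :=
    Finset.univ.biUnion (fun p : G.Path k l =>
      (T p).image (fun τ => p.1.support.formPerm * τ)) with hS'
  have hS'S : S' ⊆ Finset.univ.filter fun σ : Equiv.Perm (Fin n) => σ l = k := by
    intro σ hσ
    rw [hS', Finset.mem_biUnion] at hσ
    obtain ⟨p, -, hσ⟩ := hσ
    rw [Finset.mem_image] at hσ
    obtain ⟨τ, hτ, rfl⟩ := hσ
    rw [hT, Finset.mem_filter] at hτ
    rw [Finset.mem_filter]
    refine ⟨Finset.mem_univ _, ?_⟩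
    have hne : p.1.support ≠ [] := p.1.support_ne_nil
    have hτl : τ l = l := hτ.2 l p.1.end_mem_support
    rw [Equiv.Perm.mul_apply, hτl]
    have h3 := formPerm_getLast_head p.1.support p.2.support_nodup (path_two_le hkl_ne p) hne
    rw [support_getLast p.1 hne, path_head p] at h3
    exact h3
  have hvanish : ∀ σ ∈ Finset.univ.filter fun σ : Equiv.Perm (Fin n) => σ l = k,
      σ ∉ S' → g σ = 0 := by
    intro σ hσ hnot
    by_contra hF
    have hσl : σ l = k := (Finset.mem_filter.mp hσ).2
    have hstep : ∀ i : Fin n, i ≠ l → i = σ i ∨ G.Adj i (σ i) := by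
      intro i hi
      by_contra hcon
      push_neg at hcon
      apply hF
      have hzero : A i (σ i) = 0 :=
        if_neg (by rintro (h | h); exacts [hcon.1 h, hcon.2 h])
      rw [hg]
      simp only []
      rw [Finset.prod_eq_zero (Finset.mem_erase.mpr ⟨hi, Finset.mem_univ i⟩) hzero, mul_zero]
    obtain ⟨p, τ, hτ, heq⟩ := exists_path_of_admissible hkl_ne σ hσl hstep
    exact hnot (by
      rw [hS', Finset.mem_biUnion]
      exact ⟨p, Finset.mem_univ _, Finset.mem_image.mpr
        ⟨τ, by rw [hT]; exact Finset.mem_filter.mpr ⟨Finset.mem_univ _, hτ⟩, heq⟩⟩)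
  have hdisjU : (↑(Finset.univ : Finset (G.Path k l)) : Set (G.Path k l)).PairwiseDisjoint
      (fun p : G.Path k l => (T p).image (fun τ => p.1.support.formPerm * τ)) := by
    intro p _ q _ hpq
    simp only [Function.onFun]
    rw [Finset.disjoint_left]
    intro σ hσp hσq
    obtain ⟨τ, hτ, hτe⟩ := Finset.mem_image.mp hσp
    obtain ⟨τ', hτ', hτe'⟩ := Finset.mem_image.mp hσq
    rw [hT, Finset.mem_filter] at hτ hτ'
    have h2 := toList_path hkl_ne p τ hτ.2
    have h3 := toList_path hkl_ne q τ' hτ'.2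
    rw [hτe] at h2
    rw [hτe'] at h3
    have hsupp : p.1.support = q.1.support := by rw [← h2, ← h3]
    exact hpq (Subtype.ext (walk_eq_of_support_eq p.1 q.1 hsupp))
  rw [← Finset.sum_subset hS'S hvanish, hS', Finset.sum_biUnion hdisjU]
  refine Finset.sum_congr rfl fun p _ => ?_
  rw [Finset.sum_image (fun τ _ τ' _ h => mul_left_cancel h)]
  -- per-path identity
  rw [principalMinorOn, minor_sum]
  have hfil : (Finset.univ.filter fun τ : Equiv.Perm (Fin n) =>
      ∀ x ∉ (Finset.univ \ p.1.support.toFinset), τ x = x) = T p := by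
    rw [hT]
    apply Finset.filter_congr
    intro τ _
    constructor
    · intro h x hx
      exact h x (by simp [Finset.mem_sdiff, List.mem_toFinset, hx])
    · intro h x hx
      simp only [Finset.mem_sdiff, Finset.mem_univ, true_and, not_not,
        List.mem_toFinset] at hx
      exact h x hx
  rw [hfil, Finset.mul_sum, Finset.sum_mul]
  refine Finset.sum_congr rfl fun τ hτ => ?_
  rw [hT, Finset.mem_filter] at hτ
  have hv := value_eq K hkl_ne p τ hτ.2
  have hsymprod : ∏ i ∈ Finset.univ \ p.1.support.toFinset, A (τ i) i
      = ∏ i ∈ Finset.univ \ p.1.support.toFinset, A i (τ i) :=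
    Finset.prod_congr rfl fun i _ => symA K n G (τ i) i
  rw [hg]
  simp only []
  rw [hsymprod]
  exact hv

end Main
end

section
/- Let ≤ be a monomial order on the polynomial ring K[x_1,…,x_m] over a field K, let J ⊆ K[x_1,…,x_m] be an ideal, and let g_1,…,g_r be a Gröbner basis of J with respect to ≤ (i.e., the g_i lie in J and for every nonzero f ∈ J the leading monomial of f is divisible by the leading monomial of some g_i). Let Z be a subset of the variables {x_1,…,x_m}, and for a polynomial h write h|_{Z=0} for the result of substituting 0 for all variables in Z. Assume that whenever g_i|_{Z=0} ≠ 0 one has LT(g_i) = LT(g_i|_{Z=0}), where LT denotes the leading term with respect to ≤. Then the nonzero polynomials g_i|_{Z=0} form a Gröbner basis of the ideal J|_{Z=0} := {f|_{Z=0} : f ∈ J} with respect to ≤, both as an ideal of K[x_1,…,x_m] and as an ideal of the subring K[{x_1,…,x_m}∖Z]; equivalently, the ideal of leading terms of J|_{Z=0} equals the image under Z ↦ 0 of the ideal of leading terms of J. -/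
open MvPolynomial
open scoped Classical

/-- `μ` is the leading monomial of the polynomial `f` with respect to the strict order
`lt` on monomials (exponent vectors): `μ` occurs in `f` and is `lt`-larger than every
other monomial occurring in `f`. -/
def IsLeadingMonomial {K : Type*} [Field K] {m : ℕ}
    (lt : (Fin m →₀ ℕ) → (Fin m →₀ ℕ) → Prop) (f : MvPolynomial (Fin m) K)
    (μ : Fin m →₀ ℕ) : Prop :=
  μ ∈ f.support ∧ ∀ ν ∈ f.support, ν ≠ μ → lt ν μ

/-- The `K`-algebra endomorphism of `K[x_1,…,x_m]` substituting `0` for every variable in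
`Z` and leaving the other variables unchanged, `h ↦ h|_{Z=0}`. -/
noncomputable def setZero (K : Type*) [Field K] {m : ℕ} (Z : Set (Fin m)) :
    MvPolynomial (Fin m) K →ₐ[K] MvPolynomial (Fin m) K :=
  MvPolynomial.aeval fun j => if j ∈ Z then 0 else MvPolynomial.X j

section Aux

variable {K : Type*} [Field K] {m : ℕ} {Z : Set (Fin m)}

lemma setZero_monomial (σ : Fin m →₀ ℕ) (c : K) :
    setZero K Z (monomial σ c) =
      if ∀ j ∈ Z, σ j = 0 then monomial σ c else 0 := by
  rw [setZero, aeval_monomial]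
  split_ifs with h
  · have h2 : (σ.prod fun n e => (if n ∈ Z then 0 else X n : MvPolynomial (Fin m) K) ^ e)
        = σ.prod fun n e => (X n : MvPolynomial (Fin m) K) ^ e := by
      apply Finsupp.prod_congr
      intro j hj
      rw [if_neg]
      intro hjZ
      exact (Finsupp.mem_support_iff.mp hj) (h j hjZ)
    rw [h2, monomial_eq, algebraMap_eq]
  · push_neg at h
    obtain ⟨j, hjZ, hj⟩ := h
    have h2 : (σ.prod fun n e => (if n ∈ Z then 0 else X n : MvPolynomial (Fin m) K) ^ e)
        = 0 := by
      apply Finset.prod_eq_zero (Finsupp.mem_support_iff.mpr hj)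
      show (if j ∈ Z then 0 else X j : MvPolynomial (Fin m) K) ^ σ j = 0
      rw [if_pos hjZ, zero_pow hj]
    rw [h2, mul_zero]

lemma coeff_setZero (q : MvPolynomial (Fin m) K) (μ : Fin m →₀ ℕ) :
    coeff μ (setZero K Z q) = if ∀ j ∈ Z, μ j = 0 then coeff μ q else 0 := by
  conv_lhs => rw [q.as_sum]
  rw [map_sum, coeff_sum]
  have h : ∀ σ ∈ q.support,
      coeff μ (setZero K Z (monomial σ (coeff σ q)))
        = if σ = μ then (if ∀ j ∈ Z, μ j = 0 then coeff μ q else 0) else 0 := by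
    intro σ _
    rw [setZero_monomial, apply_ite (coeff μ), coeff_monomial, coeff_zero]
    by_cases hσμ : σ = μ
    · subst hσμ; simp
    · simp [hσμ]
  rw [Finset.sum_congr rfl h, Finset.sum_ite_eq' q.support μ]
  by_cases hμ : μ ∈ q.support
  · rw [if_pos hμ]
  · rw [if_neg hμ]
    rw [notMem_support_iff.mp hμ]
    split_ifs <;> rfl

end Aux

/-- The "slice" of a polynomial along the `Z`-monomial `α`: the polynomial in the
variables outside `Z` whose coefficient at a `Z`-free monomial `μ` is the coefficient
of `μ + α` in `p`. -/
noncomputable def sliceZ (K : Type*) [Field K] {m : ℕ} (Z : Set (Fin m)) (α : Fin m →₀ ℕ)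
    (p : MvPolynomial (Fin m) K) : MvPolynomial (Fin m) K :=
  ∑ μ ∈ p.support.image (· - α),
    if ∀ j ∈ Z, μ j = 0 then monomial μ (coeff (μ + α) p) else 0

section SliceSec

variable {K : Type*} [Field K] {m : ℕ} {Z : Set (Fin m)}

lemma coeff_slice (α : Fin m →₀ ℕ) (p : MvPolynomial (Fin m) K) (μ : Fin m →₀ ℕ) :
    coeff μ (sliceZ K Z α p) = if ∀ j ∈ Z, μ j = 0 then coeff (μ + α) p else 0 := by
  rw [sliceZ, coeff_sum]
  have h : ∀ σ ∈ p.support.image (· - α),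
      coeff μ (if ∀ j ∈ Z, σ j = 0 then monomial σ (coeff (σ + α) p) else 0)
        = if σ = μ then (if ∀ j ∈ Z, μ j = 0 then coeff (μ + α) p else 0) else 0 := by
    intro σ _
    rw [apply_ite (coeff μ), coeff_monomial, coeff_zero]
    by_cases hσμ : σ = μ
    · subst hσμ; simp
    · simp [hσμ]
  rw [Finset.sum_congr rfl h, Finset.sum_ite_eq' _ μ]
  by_cases hμ : μ ∈ p.support.image (· - α)
  · rw [if_pos hμ]
  · rw [if_neg hμ]
    have hc : coeff (μ + α) p = 0 := by
      by_contra hc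
      exact hμ (Finset.mem_image.mpr ⟨μ + α, mem_support_iff.mpr hc, add_tsub_cancel_right μ α⟩)
    rw [hc]
    split_ifs <;> rfl

lemma slice_add (α : Fin m →₀ ℕ) (p q : MvPolynomial (Fin m) K) :
    sliceZ K Z α (p + q) = sliceZ K Z α p + sliceZ K Z α q := by
  ext μ
  rw [coeff_add, coeff_slice, coeff_slice, coeff_slice, coeff_add]
  split_ifs <;> simp

lemma slice_zero (α : Fin m →₀ ℕ) : sliceZ K Z α (0 : MvPolynomial (Fin m) K) = 0 := by
  ext μ
  rw [coeff_slice, coeff_zero]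
  split_ifs <;> simp

lemma slice_monomial_mul (α γ : Fin m →₀ ℕ) (hα : ∀ j, j ∉ Z → α j = 0) (c : K)
    (a : MvPolynomial (Fin m) K) :
    sliceZ K Z α ((monomial γ c) * a)
      = if γ.filter (· ∈ Z) ≤ α then
          (monomial (γ.filter (· ∉ Z)) c) * sliceZ K Z (α - γ.filter (· ∈ Z)) a
        else 0 := by
  ext μ
  rw [coeff_slice, mul_comm (monomial γ c) a, coeff_mul_monomial']
  by_cases hgood : ∀ j ∈ Z, μ j = 0
  · rw [if_pos hgood]
    have hiff : γ ≤ μ + α ↔ (γ.filter (· ∈ Z) ≤ α ∧ γ.filter (· ∉ Z) ≤ μ) := by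
      constructor
      · intro h
        constructor
        · rw [Finsupp.le_def]; intro j; rw [Finsupp.filter_apply]
          split_ifs with hjz
          · have := h j; rw [Finsupp.add_apply, hgood j hjz, zero_add] at this; exact this
          · exact Nat.zero_le _
        · rw [Finsupp.le_def]; intro j; rw [Finsupp.filter_apply]
          split_ifs with hjz
          · exact Nat.zero_le _
          · have := h j; rw [Finsupp.add_apply, hα j hjz, add_zero] at this; exact this
      · rintro ⟨h1, h2⟩
        rw [Finsupp.le_def]; intro j
        by_cases hj : j ∈ Z
        · have := h1 j
          rw [Finsupp.filter_apply, if_pos hj] at this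
          rw [Finsupp.add_apply, hgood j hj, zero_add]; exact this
        · have := h2 j
          rw [Finsupp.filter_apply, if_pos hj] at this
          rw [Finsupp.add_apply, hα j hj, add_zero]; exact this
    split_ifs with h1 h2 h2
    · have hg : γ.filter (· ∉ Z) ≤ μ := (hiff.mp h1).2
      rw [mul_comm ((monomial (γ.filter (· ∉ Z))) c), coeff_mul_monomial', if_pos hg,
        coeff_slice, if_pos]
      · congr 2
        ext j
        rw [Finsupp.tsub_apply, Finsupp.add_apply, Finsupp.add_apply, Finsupp.tsub_apply,
          Finsupp.tsub_apply, Finsupp.filter_apply, Finsupp.filter_apply]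
        by_cases hj : j ∈ Z
        · rw [if_pos hj, if_neg (by simpa using hj), hgood j hj]; omega
        · rw [if_neg hj, if_pos hj, hα j hj]; omega
      · intro j hj
        rw [Finsupp.tsub_apply, Finsupp.filter_apply, hgood j hj]
        omega
    · exact absurd (hiff.mp h1).1 h2
    · rw [mul_comm ((monomial (γ.filter (· ∉ Z))) c), coeff_mul_monomial',
        if_neg (fun hg => h1 (hiff.mpr ⟨h2, hg⟩))]
    · rfl
  · rw [if_neg hgood]
    split_ifs with hz
    · rw [mul_comm ((monomial (γ.filter (· ∉ Z))) c), coeff_mul_monomial']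
      split_ifs with hg
      · rw [coeff_slice, if_neg, zero_mul]
        intro hgood'
        apply hgood
        intro j hj
        have := hgood' j hj
        rw [Finsupp.tsub_apply, Finsupp.filter_apply, if_neg (by simpa using hj)] at this
        omega
      · rfl
    · rfl

lemma slice_mem_image (J : Ideal (MvPolynomial (Fin m) K)) :
    ∀ f ∈ Ideal.span (setZero K Z '' (J : Set (MvPolynomial (Fin m) K))),
      ∀ α : Fin m →₀ ℕ, (∀ j, j ∉ Z → α j = 0) →
        sliceZ K Z α f ∈ setZero K Z '' (J : Set (MvPolynomial (Fin m) K)) := by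
  intro f hf
  have hzero : (0 : MvPolynomial (Fin m) K) ∈ setZero K Z '' (J : Set (MvPolynomial (Fin m) K)) :=
    ⟨0, J.zero_mem, map_zero _⟩
  have haddmem : ∀ x y : MvPolynomial (Fin m) K,
      x ∈ setZero K Z '' (J : Set (MvPolynomial (Fin m) K)) →
      y ∈ setZero K Z '' (J : Set (MvPolynomial (Fin m) K)) →
      x + y ∈ setZero K Z '' (J : Set (MvPolynomial (Fin m) K)) := by
    rintro x y ⟨a, ha, rfl⟩ ⟨b, hb, rfl⟩
    exact ⟨a + b, J.add_mem ha hb, map_add _ a b⟩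
  have hgoodmul : ∀ (γ : Fin m →₀ ℕ) (c : K) (x : MvPolynomial (Fin m) K),
      (∀ j ∈ Z, γ j = 0) →
      x ∈ setZero K Z '' (J : Set (MvPolynomial (Fin m) K)) →
      monomial γ c * x ∈ setZero K Z '' (J : Set (MvPolynomial (Fin m) K)) := by
    rintro γ c x hγ ⟨a, ha, rfl⟩
    exact ⟨monomial γ c * a, J.mul_mem_left _ ha,
      by rw [map_mul, setZero_monomial, if_pos hγ]⟩
  induction hf using Submodule.span_induction with
  | mem x hx =>
    obtain ⟨q, hqJ, rfl⟩ := hx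
    intro α hα
    by_cases h0 : α = 0
    · subst h0
      have he : sliceZ K Z 0 (setZero K Z q) = setZero K Z q := by
        ext μ
        rw [coeff_slice]
        split_ifs with h
        · rw [add_zero]
        · rw [coeff_setZero, if_neg h]
      rw [he]
      exact ⟨q, hqJ, rfl⟩
    · have he : sliceZ K Z α (setZero K Z q) = 0 := by
        ext μ
        rw [coeff_slice, coeff_zero]
        split_ifs with h
        · rw [coeff_setZero, if_neg]
          intro hgood
          obtain ⟨j, hj⟩ := Finsupp.ne_iff.mp h0
          rw [Finsupp.coe_zero, Pi.zero_apply] at hj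
          have hjZ : j ∈ Z := by
            by_contra hjZ
            exact hj (hα j hjZ)
          have := hgood j hjZ
          rw [Finsupp.add_apply] at this
          omega
        · rfl
      rw [he]
      exact hzero
  | zero =>
    intro α hα
    rw [slice_zero]
    exact hzero
  | add x y hx hy ihx ihy =>
    intro α hα
    rw [slice_add]
    exact haddmem _ _ (ihx α hα) (ihy α hα)
  | smul r x hx ih =>
    intro α hα
    rw [smul_eq_mul]
    have hrx : r * x = ∑ γ ∈ r.support, monomial γ (coeff γ r) * x := by
      rw [← Finset.sum_mul, ← r.as_sum]
    have hsum : sliceZ K Z α (∑ γ ∈ r.support, monomial γ (coeff γ r) * x)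
        = ∑ γ ∈ r.support, sliceZ K Z α (monomial γ (coeff γ r) * x) :=
      map_sum (AddMonoidHom.mk' (sliceZ K Z α) (slice_add α)) _ _
    rw [hrx, hsum]
    apply Finset.sum_induction _ _ haddmem hzero
    intro γ _
    rw [slice_monomial_mul _ _ hα]
    split_ifs with hz
    · apply hgoodmul
      · intro j hj
        rw [Finsupp.filter_apply, if_neg (by simpa using hj)]
      · apply ih
        intro j hj
        rw [Finsupp.tsub_apply, Finsupp.filter_apply, if_neg hj, hα j hj]
        rfl
    · exact hzero

end SliceSec

section OrderSec

variable {α : Type*} {lt : α → α → Prop}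

lemma exists_max_rel (htrans : ∀ a b c, lt a b → lt b c → lt a c)
    (htotal : ∀ a b, a = b ∨ lt a b ∨ lt b a)
    (s : Finset α) : s.Nonempty → ∃ μ ∈ s, ∀ ν ∈ s, ν ≠ μ → lt ν μ := by
  classical
  induction s using Finset.induction_on with
  | empty => rintro ⟨x, hx⟩; exact absurd hx (Finset.notMem_empty x)
  | insert a s ha ih =>
    intro _
    by_cases hs : s.Nonempty
    · obtain ⟨μ, hμs, hμ⟩ := ih hs
      rcases htotal a μ with h | h | h
      · subst h
        refine ⟨a, Finset.mem_insert_self a s, ?_⟩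
        intro ν hν hνa
        rcases Finset.mem_insert.mp hν with rfl | hν'
        · exact absurd rfl hνa
        · exact hμ ν hν' hνa
      · refine ⟨μ, Finset.mem_insert_of_mem hμs, ?_⟩
        intro ν hν hνμ
        rcases Finset.mem_insert.mp hν with rfl | hν'
        · exact h
        · exact hμ ν hν' hνμ
      · refine ⟨a, Finset.mem_insert_self a s, ?_⟩
        intro ν hν hνa
        rcases Finset.mem_insert.mp hν with rfl | hν'
        · exact absurd rfl hνa
        · by_cases hνμ : ν = μ
          · subst hνμ; exact h
          · exact htrans ν μ a (hμ ν hν' hνμ) h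
    · rw [Finset.not_nonempty_iff_eq_empty] at hs
      subst hs
      refine ⟨a, Finset.mem_insert_self a ∅, ?_⟩
      intro ν hν hνa
      rcases Finset.mem_insert.mp hν with rfl | hν'
      · exact absurd rfl hνa
      · exact absurd hν' (Finset.notMem_empty ν)

end OrderSec

section MvSec

variable {K : Type*} [Field K] {m : ℕ}
variable {lt : (Fin m →₀ ℕ) → (Fin m →₀ ℕ) → Prop}

lemma exists_LM (htrans : ∀ a b c, lt a b → lt b c → lt a c)
    (htotal : ∀ a b, a = b ∨ lt a b ∨ lt b a)
    (f : MvPolynomial (Fin m) K) (hf : f ≠ 0) :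
    ∃ μ, IsLeadingMonomial lt f μ := by
  obtain ⟨μ, hμ, h⟩ := exists_max_rel htrans htotal f.support
    (Finset.nonempty_iff_ne_empty.mpr (fun e => hf (support_eq_empty.mp e)))
  exact ⟨μ, hμ, h⟩

lemma LM_unique (htrans : ∀ a b c, lt a b → lt b c → lt a c)
    (hirrefl : ∀ a, ¬ lt a a)
    {f : MvPolynomial (Fin m) K} {μ μ' : Fin m →₀ ℕ}
    (h1 : IsLeadingMonomial lt f μ) (h2 : IsLeadingMonomial lt f μ') : μ = μ' := by
  by_contra hne
  exact hirrefl _ (htrans _ _ _ (h2.2 μ h1.1 hne) (h1.2 μ' h2.1 (Ne.symm hne)))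

lemma exists_min_rel
    (htrans : ∀ a b c, lt a b → lt b c → lt a c)
    (hirrefl : ∀ a, ¬ lt a a)
    (hadd : ∀ a b c, lt a b → lt (a + c) (b + c))
    (hbot : ∀ a, a ≠ 0 → lt 0 a)
    (S : Set (Fin m →₀ ℕ)) (hS : S.Nonempty) :
    ∃ ν ∈ S, ∀ ν' ∈ S, ¬ lt ν' ν := by
  by_contra hcon
  push_neg at hcon
  obtain ⟨ν₀, hν₀⟩ := hS
  choose F hF1 hF2 using hcon
  let a : ℕ → {x : Fin m →₀ ℕ // x ∈ S} :=
    fun n => Nat.recAux ⟨ν₀, hν₀⟩ (fun _ p => ⟨F p.1 p.2, hF1 p.1 p.2⟩) n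
  have ha : ∀ n, lt ((a (n + 1)).1) ((a n).1) := fun n => by
    show lt (F (a n).1 (a n).2) (a n).1
    exact hF2 _ _
  have hchain : ∀ p k, lt ((a (p + k + 1)).1) ((a p).1) := by
    intro p k
    induction k with
    | zero => exact ha p
    | succ k ih => exact htrans _ _ _ (ha (p + k + 1)) ih
  obtain ⟨p, q, hpq, hle⟩ := wellQuasiOrdered_le (fun n => (a n).1)
  have hlt : lt ((a q).1) ((a p).1) := by
    have he : q = p + (q - p - 1) + 1 := by omega
    rw [he]
    exact hchain p _
  rcases eq_or_ne ((a q).1 - (a p).1) 0 with h0 | h0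
  · have heq : (a p).1 = (a q).1 :=
      le_antisymm hle (tsub_eq_zero_iff_le.mp h0)
    rw [heq] at hlt
    exact hirrefl _ hlt
  · have h1 := hadd _ _ ((a p).1) (hbot _ h0)
    rw [zero_add, tsub_add_cancel_of_le hle] at h1
    exact hirrefl _ (htrans _ _ _ h1 hlt)

lemma imageCase {r : ℕ}
    (htrans : ∀ a b c, lt a b → lt b c → lt a c)
    (hirrefl : ∀ a, ¬ lt a a)
    (htotal : ∀ a b, a = b ∨ lt a b ∨ lt b a)
    (hadd : ∀ a b c, lt a b → lt (a + c) (b + c))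
    (hbot : ∀ a, a ≠ 0 → lt 0 a)
    (J : Ideal (MvPolynomial (Fin m) K))
    (g : Fin r → MvPolynomial (Fin m) K)
    (hgJ : ∀ i, g i ∈ J)
    (hGB : ∀ f ∈ J, f ≠ 0 → ∃ (i : Fin r) (μ ν : Fin m →₀ ℕ),
      IsLeadingMonomial lt (g i) μ ∧ IsLeadingMonomial lt f ν ∧ μ ≤ ν)
    (Z : Set (Fin m))
    (hLT : ∀ i, setZero K Z (g i) ≠ 0 → ∃ μ : Fin m →₀ ℕ,
      IsLeadingMonomial lt (g i) μ ∧ IsLeadingMonomial lt (setZero K Z (g i)) μ ∧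
      MvPolynomial.coeff μ (g i) = MvPolynomial.coeff μ (setZero K Z (g i))) :
    ∀ h ∈ setZero K Z '' (J : Set (MvPolynomial (Fin m) K)), h ≠ 0 →
      ∃ (i : Fin r) (μ ν : Fin m →₀ ℕ), setZero K Z (g i) ≠ 0 ∧
        IsLeadingMonomial lt (setZero K Z (g i)) μ ∧ IsLeadingMonomial lt h ν ∧ μ ≤ ν := by
  intro h hmem hne
  obtain ⟨q0, hq0J, hq0⟩ := hmem
  have hq0ne : q0 ≠ 0 := by
    rintro rfl
    exact hne (by rw [← hq0, map_zero])
  obtain ⟨ν₁, hν₁⟩ := exists_LM htrans htotal q0 hq0ne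
  obtain ⟨ν₀, hν₀S, hmin⟩ := exists_min_rel htrans hirrefl hadd hbot
    {ν | ∃ q, q ∈ J ∧ setZero K Z q = h ∧ IsLeadingMonomial lt q ν}
    ⟨ν₁, q0, hq0J, hq0, hν₁⟩
  obtain ⟨q, hqJ, hq, hLMq⟩ := hν₀S
  have hqne : q ≠ 0 := by
    rintro rfl
    have := hLMq.1
    simp at this
  obtain ⟨i, μ, ν', hLMg, hLMq', hle⟩ := hGB q hqJ hqne
  have hν'ν₀ : ν' = ν₀ := LM_unique htrans hirrefl hLMq' hLMq
  subst hν'ν₀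
  by_cases hgood : ∀ j ∈ Z, ν' j = 0
  · have hgoodμ : ∀ j ∈ Z, μ j = 0 := fun j hj =>
      Nat.le_zero.mp ((Finsupp.le_def.mp hle j).trans_eq (hgood j hj))
    have hcoeffμ : coeff μ (setZero K Z (g i)) = coeff μ (g i) := by
      rw [coeff_setZero, if_pos hgoodμ]
    have hφg : setZero K Z (g i) ≠ 0 := by
      intro e
      exact mem_support_iff.mp hLMg.1 (by rw [← hcoeffμ, e, coeff_zero])
    obtain ⟨μ'', hμ''1, hμ''2, _⟩ := hLT i hφg
    have heq : μ'' = μ := LM_unique htrans hirrefl hμ''1 hLMg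
    subst heq
    have hLMh : IsLeadingMonomial lt h ν' := by
      constructor
      · rw [mem_support_iff, ← hq, coeff_setZero, if_pos hgood]
        exact mem_support_iff.mp hLMq.1
      · intro ν hν hνν₀
        have hc := mem_support_iff.mp hν
        rw [← hq, coeff_setZero] at hc
        by_cases hg2 : ∀ j ∈ Z, ν j = 0
        · rw [if_pos hg2] at hc
          exact hLMq.2 ν (mem_support_iff.mpr hc) hνν₀
        · rw [if_neg hg2] at hc
          exact absurd rfl hc
    exact ⟨i, μ'', ν', hφg, hμ''2, hLMh, hle⟩
  · exfalso
    push_neg at hgood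
    obtain ⟨j, hjZ, hj⟩ := hgood
    have hcμ : coeff μ (g i) ≠ 0 := mem_support_iff.mp hLMg.1
    set c := coeff ν' q / coeff μ (g i) with hc
    set δ := ν' - μ with hδdef
    have hδ : μ + δ = ν' := add_tsub_cancel_of_le hle
    set q' := q - g i * monomial δ c with hq'def
    have hq'J : q' ∈ J := J.sub_mem hqJ (J.mul_mem_right _ (hgJ i))
    have hδν₀ : δ ≤ ν' := by
      rw [← hδ]
      exact le_add_self
    have hν₀δ : ν' - δ = μ := by rw [← hδ, add_tsub_cancel_right]
    have hcν₀ : coeff ν' q' = 0 := by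
      rw [hq'def, coeff_sub, coeff_mul_monomial', if_pos hδν₀, hν₀δ, hc, mul_comm,
        div_mul_cancel₀ _ hcμ, sub_self]
    have hlt' : ∀ τ ∈ q'.support, lt τ ν' := by
      intro τ hτ
      have hcτ := mem_support_iff.mp hτ
      have hτν₀ : τ ≠ ν' := fun e => hcτ (e ▸ hcν₀)
      rw [hq'def, coeff_sub] at hcτ
      by_cases h1 : coeff τ q ≠ 0
      · exact hLMq.2 τ (mem_support_iff.mpr h1) hτν₀
      · push_neg at h1
        rw [h1, zero_sub, neg_ne_zero, coeff_mul_monomial'] at hcτ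
        by_cases hδτ : δ ≤ τ
        · rw [if_pos hδτ] at hcτ
          have hσ : coeff (τ - δ) (g i) ≠ 0 := fun e => hcτ (by rw [e, zero_mul])
          have hτeq : τ - δ + δ = τ := tsub_add_cancel_of_le hδτ
          have hσμ : τ - δ ≠ μ := fun e => hτν₀ (by rw [← hτeq, e, hδ])
          have := hadd _ _ δ (hLMg.2 _ (mem_support_iff.mpr hσ) hσμ)
          rw [hτeq, hδ] at this
          exact this
        · rw [if_neg hδτ] at hcτ
          exact absurd rfl hcτ
    have hφq' : setZero K Z q' = h := by
      rw [hq'def, map_sub, map_mul, hq]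
      by_cases hδj : δ j = 0
      · have hμj : μ j ≠ 0 := by
          intro e
          apply hj
          rw [← hδ, Finsupp.add_apply, e, hδj]
        have hφgz : setZero K Z (g i) = 0 := by
          by_contra hφg
          obtain ⟨μ'', hμ''1, hμ''2, _⟩ := hLT i hφg
          have heq : μ'' = μ := LM_unique htrans hirrefl hμ''1 hLMg
          subst heq
          have hsupp := mem_support_iff.mp hμ''2.1
          rw [coeff_setZero] at hsupp
          by_cases hgm : ∀ j' ∈ Z, μ'' j' = 0
          · exact hμj (hgm j hjZ)
          · rw [if_neg hgm] at hsupp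
            exact absurd rfl hsupp
        rw [hφgz, zero_mul, sub_zero]
      · have hz : setZero K Z ((monomial δ) c) = 0 := by
          rw [setZero_monomial, if_neg]
          push_neg
          exact ⟨j, hjZ, hδj⟩
        rw [hz, mul_zero, sub_zero]
    have hq'ne : q' ≠ 0 := by
      intro e
      apply hne
      rw [← hφq', e, map_zero]
    obtain ⟨ν'', hLM''⟩ := exists_LM htrans htotal q' hq'ne
    exact hmin ν'' ⟨q', hq'J, hφq', hLM''⟩ (hlt' ν'' hLM''.1)

end MvSec

/-- Let `≤` be a monomial order on `K[x_1,…,x_m]` (given here by its strict part `lt`,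
a total irreflexive transitive relation on monomials, compatible with multiplication and
with `1` as least element), let `g_1,…,g_r` be a Gröbner basis of an ideal `J`, and let
`Z` be a set of variables. If for every `i` with `g_i|_{Z=0} ≠ 0` the leading term of
`g_i` equals the leading term of `g_i|_{Z=0}`, then the nonzero `g_i|_{Z=0}` form a
Gröbner basis of `J|_{Z=0} = {f|_{Z=0} : f ∈ J}`, both as an ideal of `K[x_1,…,x_m]`
(i.e. for the ideal generated by `J|_{Z=0}` there) and as an ideal of the subring
`K[{x_1,…,x_m}∖Z]` (whose elements form exactly the set `J|_{Z=0}`). -/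
theorem groebner_basis_of_setZero
    (K : Type*) [Field K] (m r : ℕ)
    (lt : (Fin m →₀ ℕ) → (Fin m →₀ ℕ) → Prop)
    (htrans : ∀ a b c, lt a b → lt b c → lt a c)
    (hirrefl : ∀ a, ¬ lt a a)
    (htotal : ∀ a b, a = b ∨ lt a b ∨ lt b a)
    (hadd : ∀ a b c, lt a b → lt (a + c) (b + c))
    (hbot : ∀ a, a ≠ 0 → lt 0 a)
    (J : Ideal (MvPolynomial (Fin m) K))
    (g : Fin r → MvPolynomial (Fin m) K)
    (hgJ : ∀ i, g i ∈ J)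
    (hGB : ∀ f ∈ J, f ≠ 0 → ∃ (i : Fin r) (μ ν : Fin m →₀ ℕ),
      IsLeadingMonomial lt (g i) μ ∧ IsLeadingMonomial lt f ν ∧ μ ≤ ν)
    (Z : Set (Fin m))
    (hLT : ∀ i, setZero K Z (g i) ≠ 0 → ∃ μ : Fin m →₀ ℕ,
      IsLeadingMonomial lt (g i) μ ∧ IsLeadingMonomial lt (setZero K Z (g i)) μ ∧
      MvPolynomial.coeff μ (g i) = MvPolynomial.coeff μ (setZero K Z (g i))) :
    (∀ i, setZero K Z (g i) ∈ Ideal.span (setZero K Z '' (J : Set (MvPolynomial (Fin m) K)))) ∧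
    (∀ f ∈ Ideal.span (setZero K Z '' (J : Set (MvPolynomial (Fin m) K))), f ≠ 0 →
      ∃ (i : Fin r) (μ ν : Fin m →₀ ℕ), setZero K Z (g i) ≠ 0 ∧
        IsLeadingMonomial lt (setZero K Z (g i)) μ ∧ IsLeadingMonomial lt f ν ∧ μ ≤ ν) ∧
    (∀ f ∈ setZero K Z '' (J : Set (MvPolynomial (Fin m) K)), f ≠ 0 →
      ∃ (i : Fin r) (μ ν : Fin m →₀ ℕ), setZero K Z (g i) ≠ 0 ∧
        IsLeadingMonomial lt (setZero K Z (g i)) μ ∧ IsLeadingMonomial lt f ν ∧ μ ≤ ν) := by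
  refine ⟨?_, ?_, ?_⟩
  · intro i
    exact Ideal.subset_span ⟨g i, hgJ i, rfl⟩
  · intro f hf hfne
    obtain ⟨ν, hLMf⟩ := exists_LM htrans htotal f hfne
    set αz := ν.filter (· ∈ Z) with hαz
    set βz := ν.filter (· ∉ Z) with hβz
    have hνβα : βz + αz = ν := by
      ext j
      rw [Finsupp.add_apply, hαz, hβz, Finsupp.filter_apply, Finsupp.filter_apply]
      by_cases hj : j ∈ Z
      · rw [if_pos hj, if_neg (by simpa using hj), zero_add]
      · rw [if_neg hj, if_pos hj, add_zero]
    have hα : ∀ j, j ∉ Z → αz j = 0 := by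
      intro j hj
      rw [hαz, Finsupp.filter_apply, if_neg hj]
    have hβgood : ∀ j ∈ Z, βz j = 0 := by
      intro j hj
      rw [hβz, Finsupp.filter_apply, if_neg (by simpa using hj)]
    have hmem := slice_mem_image J f hf αz hα
    have hcoeffβ : coeff βz (sliceZ K Z αz f) = coeff ν f := by
      rw [coeff_slice, if_pos hβgood, hνβα]
    have hne' : sliceZ K Z αz f ≠ 0 := by
      intro e
      exact mem_support_iff.mp hLMf.1 (by rw [← hcoeffβ, e, coeff_zero])
    have hLM' : IsLeadingMonomial lt (sliceZ K Z αz f) βz := by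
      constructor
      · rw [mem_support_iff, hcoeffβ]
        exact mem_support_iff.mp hLMf.1
      · intro μ hμ hμβ
        have hc := mem_support_iff.mp hμ
        rw [coeff_slice] at hc
        by_cases hg2 : ∀ j ∈ Z, μ j = 0
        · rw [if_pos hg2] at hc
          have hmem2 : μ + αz ∈ f.support := mem_support_iff.mpr hc
          have hne2 : μ + αz ≠ ν := by
            intro e
            apply hμβ
            have : μ + αz = βz + αz := by rw [e, hνβα]
            exact add_right_cancel this
          have hlt2 := hLMf.2 _ hmem2 hne2
          rw [← hνβα] at hlt2
          rcases htotal μ βz with he | he | he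
          · exact absurd he hμβ
          · exact he
          · exact absurd (htrans _ _ _ hlt2 (hadd _ _ αz he)) (hirrefl _)
        · rw [if_neg hg2] at hc
          exact absurd rfl hc
    obtain ⟨i, μ0, ν'', hφg, hLMφg, hLM'', hle⟩ :=
      imageCase htrans hirrefl htotal hadd hbot J g hgJ hGB Z hLT
        (sliceZ K Z αz f) hmem hne'
    have hν''β : ν'' = βz := LM_unique htrans hirrefl hLM'' hLM'
    subst hν''β
    refine ⟨i, μ0, ν, hφg, hLMφg, hLMf, le_trans hle ?_⟩
    rw [← hνβα]
    exact le_self_add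
  · intro f hf hfne
    exact imageCase htrans hirrefl htotal hadd hbot J g hgJ hGB Z hLT f hf hfne
end

section
/- Let K be an algebraically closed field with char(K) ≠ 2 and let A be a symmetric n×n matrix over K which is principally regular, i.e., det(A_{I,I}) ≠ 0 for every nonempty subset I ⊆ [n], where A_{I,I} denotes the principal submatrix of A on rows and columns I. If A_{ij}·(A^{-1})_{ij} = 0 for all 1 ≤ i < j ≤ n, then A is a diagonal matrix. -/
/-!
Let `B = A⁻¹` and fix a column `k`. On the support `T` of the off-diagonal part of column `k`
of `B`, the hypothesis forces `A_{pk} = 0`, so `(AB)_{pk} = 0` says that the principal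
submatrix `A_{T,T}` kills `B_{T,k}`. As `A_{T,T}` is nonsingular, `T` is empty; hence `B` is
diagonal, and so is `A = B⁻¹`.
-/

open scoped Classical

namespace Matrix

variable {ι K : Type*} [Fintype ι] [DecidableEq ι] [Field K]

def IsPrincipallyRegular (A : Matrix ι ι K) : Prop :=
  ∀ s : Finset ι, s.Nonempty → (A.submatrix ((↑) : s → ι) ((↑) : s → ι)).det ≠ 0

theorem IsDiag.inv {A : Matrix ι ι K} (h : A.IsDiag) : A⁻¹.IsDiag := by
  rw [← h.diagonal_diag, inv_diagonal]
  exact isDiag_diagonal _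

namespace IsPrincipallyRegular

variable {A : Matrix ι ι K}

theorem isUnit_det (hA : A.IsPrincipallyRegular) : IsUnit A.det := by
  cases isEmpty_or_nonempty ι
  · simp [det_isEmpty]
  · have h := hA Finset.univ Finset.univ_nonempty
    exact isUnit_iff_ne_zero.mpr
      (det_submatrix_equiv_self (Equiv.subtypeUnivEquiv Finset.mem_univ) A ▸ h)

theorem eq_zero_of_mulVec_apply_eq_zero (hA : A.IsPrincipallyRegular) {v : ι → K}
    (hv : ∀ p, v p ≠ 0 → (A *ᵥ v) p = 0) : v = 0 := by
  set s := Finset.univ.filter fun p => v p ≠ 0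
  have hvs : ∀ p ∉ s, v p = 0 := by simp [s]
  rcases s.eq_empty_or_nonempty with hs | hs
  · funext p
    exact hvs p (by simp [hs])
  have hw : A.submatrix ((↑) : s → ι) ((↑) : s → ι) *ᵥ (fun p => v p) = 0 := by
    funext ⟨p, hp⟩
    calc (A.submatrix ((↑) : s → ι) ((↑) : s → ι) *ᵥ fun p => v p) ⟨p, hp⟩
        = ∑ j ∈ s, A p j * v j := Finset.sum_coe_sort s fun j => A p j * v j
      _ = (A *ᵥ v) p :=
          Finset.sum_subset (Finset.subset_univ s) fun j _ hj => by rw [hvs j hj, mul_zero]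
      _ = 0 := hv p (Finset.mem_filter.mp hp).2
  have hw0 := eq_zero_of_mulVec_eq_zero (hA s hs) hw
  funext p
  by_cases hp : p ∈ s
  · exact congrFun hw0 ⟨p, hp⟩
  · exact hvs p hp

theorem isDiag_inv (hA : A.IsPrincipallyRegular) (h : ∀ i j, i ≠ j → A i j * A⁻¹ i j = 0) :
    A⁻¹.IsDiag := by
  intro i k hik
  set v : ι → K := fun j => if j = k then 0 else A⁻¹ j k
  suffices v = 0 by simpa [v, hik] using congrFun this i
  refine hA.eq_zero_of_mulVec_apply_eq_zero fun p hp => ?_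
  have hpk : p ≠ k := by
    rintro rfl
    simp [v] at hp
  have hApk : A p k = 0 :=
    (mul_eq_zero.mp (h p k hpk)).resolve_right (by simpa [v, hpk] using hp)
  calc (A *ᵥ v) p = ∑ j, A p j * A⁻¹ j k :=
        Finset.sum_congr rfl fun j _ => by by_cases hj : j = k <;> simp [v, hj, hApk]
    _ = (A * A⁻¹) p k := mul_apply.symm
    _ = 0 := by rw [mul_nonsing_inv A hA.isUnit_det, one_apply_ne hpk]

end IsPrincipallyRegular

end Matrix

open Matrix in
theorem principally_regular_symmetric_diagonal_general
    (K : Type*) [Field K]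
    (n : ℕ) (A : Matrix (Fin n) (Fin n) K)
    (hsymm : A.IsSymm)
    (hpr : ∀ s : Finset (Fin n), s.Nonempty →
      (A.submatrix (fun i : {x : Fin n // x ∈ s} => (i : Fin n))
        (fun i : {x : Fin n // x ∈ s} => (i : Fin n))).det ≠ 0)
    (hzero : ∀ i j : Fin n, i < j → A i j * A⁻¹ i j = 0) :
    A.IsDiag := by
  have hA : A.IsPrincipallyRegular := hpr
  have hoff : ∀ i j, i ≠ j → A i j * A⁻¹ i j = 0 := by
    intro i j hij
    rcases hij.lt_or_gt with h | h
    · exact hzero i j h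
    · rw [← hsymm.apply, ← hsymm.inv.apply]
      exact hzero j i h
  rw [← nonsing_inv_nonsing_inv A hA.isUnit_det]
  exact (hA.isDiag_inv hoff).inv

/-- Let `K` be an algebraically closed field of characteristic different from `2` and let
`A` be a symmetric `n × n` matrix over `K` which is principally regular, i.e. all its
principal minors are nonzero. If `A_{ij} · (A⁻¹)_{ij} = 0` for all `i < j`, then `A` is a
diagonal matrix. -/
theorem principally_regular_symmetric_diagonal
    (K : Type*) [Field K] [IsAlgClosed K] (hchar : ringChar K ≠ 2)
    (n : ℕ) (hn : 1 ≤ n) (A : Matrix (Fin n) (Fin n) K)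
    (hsymm : A.IsSymm)
    (hpr : ∀ s : Finset (Fin n), s.Nonempty →
      (A.submatrix (fun i : {x : Fin n // x ∈ s} => (i : Fin n))
        (fun i : {x : Fin n // x ∈ s} => (i : Fin n))).det ≠ 0)
    (hzero : ∀ i j : Fin n, i < j → A i j * A⁻¹ i j = 0) :
    A.IsDiag :=
  principally_regular_symmetric_diagonal_general K n A hsymm hpr hzero
end

section
/- Let K be a field, n ≥ 2, G a simple graph on [n], and 2 ≤ k ≤ n. If there exists a subset M ⊆ [n] with |M| = k such that the induced subgraph of G on M is disconnected, then the ideal I_k(X_G) ⊆ R generated by all k×k minors of X_G is not a prime ideal. Equivalently, if I_k(X_G) is prime then G is (n−k+1)-connected in the sense that the induced subgraph of G on every k-element subset of [n] is connected. -/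
open MvPolynomial
open scoped Classical

/-- The ideal of `k × k` minors of a square matrix `M` over a commutative ring: it is
generated by the determinants of all `k × k` submatrices of `M` (given by choosing `k`
distinct rows and `k` distinct columns). -/
noncomputable def minorsIdeal {R : Type*} [CommRing R] {n : ℕ} (k : ℕ)
    (M : Matrix (Fin n) (Fin n) R) : Ideal R :=
  Ideal.span { d | ∃ f g : Fin k → Fin n,
    Function.Injective f ∧ Function.Injective g ∧ d = (M.submatrix f g).det }

section Aux
variable {K : Type*} [Field K] {n : ℕ} {G : SimpleGraph (Fin n)}

lemma sparseGenericSym_isHomogeneous (i j : Fin n) :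
    (sparseGenericSym K n G i j).IsHomogeneous 1 := by
  simp only [sparseGenericSym]
  split
  · exact isHomogeneous_X _ _
  · exact isHomogeneous_zero _ _ _

lemma det_isHomogeneous {a : ℕ} (N : Matrix (Fin a) (Fin a) (SymPolyRing K n))
    (hN : ∀ i j, (N i j).IsHomogeneous 1) : N.det.IsHomogeneous a := by
  rw [Matrix.det_apply]
  apply MvPolynomial.IsHomogeneous.sum
  intro σ _
  have h : (∏ i, N (σ i) i).IsHomogeneous a := by
    have := MvPolynomial.IsHomogeneous.prod Finset.univ (fun i => N (σ i) i) (fun _ => 1)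
      (fun i _ => hN _ _)
    simpa using this
  rcases Int.units_eq_one_or (Equiv.Perm.sign σ) with hs | hs <;> rw [hs]
  · simpa using h
  · simpa using h.neg

noncomputable def lowVanish (K : Type*) [Field K] (n k : ℕ) : Ideal (SymPolyRing K n) where
  carrier := {p | ∀ d : Sym2 (Fin n) →₀ ℕ, d.degree < k → coeff d p = 0}
  add_mem' := fun ha hb d hd => by rw [coeff_add, ha d hd, hb d hd, add_zero]
  zero_mem' := fun d _ => coeff_zero d
  smul_mem' := fun c p hp d hd => by
    rw [smul_eq_mul, coeff_mul]
    apply Finset.sum_eq_zero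
    rintro ⟨d₁, d₂⟩ hmem
    rw [Finset.HasAntidiagonal.mem_antidiagonal] at hmem
    have hdd : d.degree = d₁.degree + d₂.degree := by
      rw [← hmem]; simp [Finsupp.degree_eq_weight_one, map_add]
    exact mul_eq_zero_of_right _ (hp d₂ (by omega))

lemma minorsIdeal_le_lowVanish (k : ℕ) :
    minorsIdeal k (sparseGenericSym K n G) ≤ lowVanish K n k := by
  rw [minorsIdeal, Ideal.span_le]
  rintro p ⟨f, g, hf, hg, rfl⟩
  intro d hd
  exact (det_isHomogeneous _ (fun i j => sparseGenericSym_isHomogeneous _ _)).coeff_eq_zero hd.ne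

lemma det_submatrix_ne_zero {a : ℕ} (f : Fin a → Fin n) (hf : Function.Injective f) :
    ((sparseGenericSym K n G).submatrix f f).det ≠ 0 := by
  intro h0
  have h := congrArg (aeval (R := K) (fun v : Sym2 (Fin n) => if v.IsDiag then (1:K) else 0)) h0
  rw [map_zero, AlgHom.map_det, AlgHom.mapMatrix_apply] at h
  have hmap : ((sparseGenericSym K n G).submatrix f f).map
      ⇑(aeval (R := K) (fun v : Sym2 (Fin n) => if v.IsDiag then (1:K) else 0)) = (1 : Matrix (Fin a) (Fin a) K) := by
    refine Matrix.ext fun i j => ?_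
    simp only [Matrix.map_apply, Matrix.submatrix_apply, sparseGenericSym]
    by_cases hij : i = j
    · subst hij; simp [Matrix.one_apply]
    · have hne : f i ≠ f j := fun hh => hij (hf hh)
      rcases em (G.Adj (f i) (f j)) with hadj | hadj
      · simp [hadj, Sym2.mk_isDiag_iff, hne, Matrix.one_apply, hij]
      · simp [hne, hadj, Matrix.one_apply, hij]
  rw [hmap, Matrix.det_one] at h
  exact one_ne_zero h

lemma det_not_mem_minors {a k : ℕ} (hak : a < k) (f : Fin a → Fin n)
    (hf : Function.Injective f) :
    ((sparseGenericSym K n G).submatrix f f).det ∉ minorsIdeal k (sparseGenericSym K n G) := by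
  intro hmem
  apply det_submatrix_ne_zero (G := G) (K := K) f hf
  have hh : ((sparseGenericSym K n G).submatrix f f).det.IsHomogeneous a :=
    det_isHomogeneous _ (fun i j => sparseGenericSym_isHomogeneous _ _)
  have hlow := minorsIdeal_le_lowVanish k hmem
  refine MvPolynomial.ext _ _ fun d => ?_
  rw [coeff_zero]
  by_cases hdd : d.degree = a
  · exact hlow d (hdd ▸ hak)
  · exact hh.coeff_eq_zero hdd

end Aux

/-- If the induced subgraph of `G` on some `k`-element subset `M` of `[n]` is
disconnected, then the ideal `I_k(X_G)` of `k × k` minors of the sparse generic symmetric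
matrix `X_G` is not prime. Equivalently, if `I_k(X_G)` is prime then `G` is
`(n−k+1)`-connected. -/
theorem minors_sparse_symmetric_not_prime_of_induced_disconnected
    (K : Type*) [Field K] (n : ℕ) (hn : 2 ≤ n) (G : SimpleGraph (Fin n))
    (k : ℕ) (hk2 : 2 ≤ k) (hkn : k ≤ n) (M : Finset (Fin n)) (hM : M.card = k)
    (hdis : ¬ (G.induce (M : Set (Fin n))).Connected) :
    ¬ (minorsIdeal k (sparseGenericSym K n G)).IsPrime := by
  intro hprime
  have hMne : M.Nonempty := Finset.card_pos.mp (by omega)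
  have hne : Nonempty (M : Set (Fin n)) := by
    obtain ⟨x, hx⟩ := hMne
    exact ⟨⟨x, by exact_mod_cast hx⟩⟩
  have hpre : ¬ (G.induce (M : Set (Fin n))).Preconnected := by
    intro hp
    exact hdis ((SimpleGraph.connected_iff _).mpr ⟨hp, hne⟩)
  rw [SimpleGraph.Preconnected] at hpre
  push_neg at hpre
  obtain ⟨u, v, huv⟩ := hpre
  set A : Finset (Fin n) :=
    M.filter (fun x => ∀ hx : x ∈ M,
      (G.induce (M : Set (Fin n))).Reachable u ⟨x, by exact_mod_cast hx⟩) with hA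
  set B : Finset (Fin n) := M \ A with hB
  have hAsub : A ⊆ M := Finset.filter_subset _ _
  -- closure of A under adjacency within M
  have hAB : ∀ x ∈ A, ∀ y ∈ B, ¬ (x = y ∨ G.Adj x y) := by
    rintro x hx y hy (rfl | hadj)
    · exact (Finset.mem_sdiff.mp hy).2 hx
    · obtain ⟨hxM, hreach⟩ := Finset.mem_filter.mp hx
      obtain ⟨hyM, hyA⟩ := Finset.mem_sdiff.mp hy
      apply hyA
      refine Finset.mem_filter.mpr ⟨hyM, fun hy' => ?_⟩
      refine (hreach hxM).trans (SimpleGraph.Adj.reachable ?_)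
      exact hadj
  have huA : (u : Fin n) ∈ A := by
    refine Finset.mem_filter.mpr ⟨by exact_mod_cast u.2, fun hx => ?_⟩
    have : (⟨(u : Fin n), by exact_mod_cast hx⟩ : (M : Set (Fin n))) = u := Subtype.ext rfl
    rw [this]
  have hvB : (v : Fin n) ∈ B := by
    refine Finset.mem_sdiff.mpr ⟨by exact_mod_cast v.2, fun hv => ?_⟩
    obtain ⟨hvM, hreach⟩ := Finset.mem_filter.mp hv
    apply huv
    have := hreach hvM
    have hvv : (⟨(v : Fin n), by exact_mod_cast hvM⟩ : (M : Set (Fin n))) = v := Subtype.ext rfl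
    rwa [hvv] at this
  have hcard : A.card + B.card = k := by
    rw [hB, add_comm, Finset.card_sdiff_add_card_eq_card hAsub, hM]
  have hAk : A.card < k := by
    have : 1 ≤ B.card := Finset.card_pos.mpr ⟨_, hvB⟩
    omega
  have hBk : B.card < k := by
    have : 1 ≤ A.card := Finset.card_pos.mpr ⟨_, huA⟩
    omega
  -- enumerations
  set g1 : Fin A.card → Fin n := fun i => ((A.equivFin.symm i : A) : Fin n) with hg1def
  set g2 : Fin B.card → Fin n := fun i => ((B.equivFin.symm i : B) : Fin n) with hg2def
  have hg1 : Function.Injective g1 :=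
    Subtype.coe_injective.comp A.equivFin.symm.injective
  have hg2 : Function.Injective g2 :=
    Subtype.coe_injective.comp B.equivFin.symm.injective
  have hg1A : ∀ i, g1 i ∈ A := fun i => (A.equivFin.symm i).2
  have hg2B : ∀ i, g2 i ∈ B := fun i => (B.equivFin.symm i).2
  have hinj : Function.Injective (Sum.elim g1 g2) := by
    rintro (i | i) (j | j) h <;> simp only [Sum.elim_inl, Sum.elim_inr] at h
    · exact congrArg Sum.inl (hg1 h)
    · exact absurd (Or.inl h) (hAB _ (hg1A i) _ (hg2B j))
    · exact absurd (Or.inl h.symm) (hAB _ (hg1A j) _ (hg2B i))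
    · exact congrArg Sum.inr (hg2 h)
  set e : Fin k ≃ Fin A.card ⊕ Fin B.card :=
    (finCongr hcard.symm).trans finSumFinEquiv.symm with he
  have hblock : (sparseGenericSym K n G).submatrix (Sum.elim g1 g2) (Sum.elim g1 g2)
      = Matrix.fromBlocks ((sparseGenericSym K n G).submatrix g1 g1) 0 0
          ((sparseGenericSym K n G).submatrix g2 g2) := by
    refine Matrix.ext fun i j => ?_
    rcases i with i | i <;> rcases j with j | j
    · rfl
    · show sparseGenericSym K n G (g1 i) (g2 j) = 0
      simp only [sparseGenericSym]
      rw [if_neg (hAB _ (hg1A i) _ (hg2B j))]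
    · show sparseGenericSym K n G (g2 i) (g1 j) = 0
      simp only [sparseGenericSym]
      refine if_neg ?_
      rintro (h | h)
      · exact hAB _ (hg1A j) _ (hg2B i) (Or.inl h.symm)
      · exact hAB _ (hg1A j) _ (hg2B i) (Or.inr h.symm)
    · rfl
  have hdetprod : ((sparseGenericSym K n G).submatrix (Sum.elim g1 g2 ∘ e) (Sum.elim g1 g2 ∘ e)).det
      = ((sparseGenericSym K n G).submatrix g1 g1).det *
        ((sparseGenericSym K n G).submatrix g2 g2).det := by
    rw [← Matrix.submatrix_submatrix, Matrix.det_submatrix_equiv_self, hblock,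
      Matrix.det_fromBlocks_zero₂₁]
  have hmem : ((sparseGenericSym K n G).submatrix (Sum.elim g1 g2 ∘ e) (Sum.elim g1 g2 ∘ e)).det
      ∈ minorsIdeal k (sparseGenericSym K n G) := by
    refine Ideal.subset_span ⟨Sum.elim g1 g2 ∘ e, Sum.elim g1 g2 ∘ e, ?_, ?_, rfl⟩ <;>
      exact hinj.comp e.injective
  rw [hdetprod] at hmem
  rcases hprime.mem_or_mem hmem with h | h
  · exact det_not_mem_minors hAk g1 hg1 h
  · exact det_not_mem_minors hBk g2 hg2 h
end

section
/- For every k ∈ [n], the principal submaximal minor det((X_G)_{[n]∖{k}, [n]∖{k}}) is a nonzero polynomial; and for all 1 ≤ k < l ≤ n, the submaximal minor det((X_G)_{[n]∖{k}, [n]∖{l}}) is the zero polynomial if and only if there is no path in G between k and l, i.e., if and only if k and l lie in different connected components of G. -/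
open MvPolynomial
open scoped Classical

-- Auxiliary lemmas
lemma dropIdx_ne {n : ℕ} (hn : 2 ≤ n) (k : Fin n) (i : Fin (n-1)) : dropIdx hn k i ≠ k := by
  unfold dropIdx
  intro h
  exact Fin.succAbove_ne (Fin.cast (by omega : n = n - 1 + 1) k) i
    (Fin.ext (by simpa using congrArg Fin.val h))

lemma dropIdx_injective {n : ℕ} (hn : 2 ≤ n) (k : Fin n) : Function.Injective (dropIdx hn k) := by
  intro a b h
  unfold dropIdx at h
  exact (Fin.succAbove_right_injective (p := (Fin.cast (by omega : n = n - 1 + 1) k)))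
    (Fin.cast_injective _ h)

lemma dropIdx_surj {n : ℕ} (hn : 2 ≤ n) (k : Fin n) {j : Fin n} (h : j ≠ k) :
    ∃ i, dropIdx hn k i = j := by
  obtain ⟨z, hz⟩ := Fin.exists_succAbove_eq
    (x := Fin.cast (by omega : n = n - 1 + 1) j) (y := Fin.cast (by omega : n = n - 1 + 1) k)
    (by intro hc; exact h (Fin.ext (by simpa using congrArg Fin.val hc)))
  exact ⟨z, by unfold dropIdx; rw [hz]; simp⟩

noncomputable def dropEquiv {n : ℕ} (hn : 2 ≤ n) (k : Fin n) : Fin (n-1) ≃ {x : Fin n // x ≠ k} :=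
  Equiv.ofBijective (fun i => ⟨dropIdx hn k i, dropIdx_ne hn k i⟩)
    ⟨fun a b h => dropIdx_injective hn k (congrArg Subtype.val h),
     fun x => by obtain ⟨i, hi⟩ := dropIdx_surj hn k x.2; exact ⟨i, Subtype.ext hi⟩⟩

@[simp] lemma dropEquiv_apply {n : ℕ} (hn : 2 ≤ n) (k : Fin n) (i : Fin (n-1)) :
    (dropEquiv hn k i : Fin n) = dropIdx hn k i := rfl

namespace SimpleGraph.Walk
variable {V : Type*} {G : SimpleGraph V}

lemma mem_edges_of_index {x y : V} (p : G.Walk x y) :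
    ∀ t, t < p.length → s(p.getVert t, p.getVert (t+1)) ∈ p.edges := by
  induction p with
  | nil => intro t ht; simp at ht
  | cons h q ih =>
    intro t ht
    cases t with
    | zero =>
      simp only [getVert_zero, getVert_cons_succ, edges_cons]
      left
    | succ t =>
      simp only [getVert_cons_succ, edges_cons]
      right
      exact ih t (by simpa using ht)

lemma index_of_mem_edges {x y : V} (p : G.Walk x y) :
    ∀ e ∈ p.edges, ∃ t, t < p.length ∧ e = s(p.getVert t, p.getVert (t+1)) := by
  induction p with
  | nil => intro e he; simp at he
  | cons h q ih =>
    intro e he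
    rw [edges_cons, List.mem_cons] at he
    rcases he with he | he
    · exact ⟨0, by simp, by simpa [getVert_zero, getVert_cons_succ, getVert_zero] using he⟩
    · obtain ⟨t, ht, hte⟩ := ih e he
      exact ⟨t + 1, by simpa using Nat.succ_lt_succ ht, by simpa [getVert_cons_succ] using hte⟩

lemma support_get_eq_getVert {x y : V} (p : G.Walk x y) :
    ∀ (t : ℕ) (h : t < p.support.length), p.support.get ⟨t, h⟩ = p.getVert t := by
  induction p with
  | nil => intro t h; simp at h; subst h; rfl
  | cons hadj q ih =>
    intro t h
    cases t with
    | zero => rfl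
    | succ t =>
      have h' : t < q.support.length := by simpa [support_cons] using h
      have : (cons hadj q).support.get ⟨t + 1, h⟩ = q.support.get ⟨t, h'⟩ := by
        simp [support_cons]
      rw [this, ih t h', getVert_cons_succ]

lemma getVert_injOn_of_isPath {x y : V} {p : G.Walk x y} (hp : p.IsPath) :
    ∀ s t, s ≤ p.length → t ≤ p.length → p.getVert s = p.getVert t → s = t := by
  intro s t hs ht h
  have hlen := p.length_support
  have hs' : s < p.support.length := by omega
  have ht' : t < p.support.length := by omega
  rw [← support_get_eq_getVert p s hs', ← support_get_eq_getVert p t ht'] at h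
  have := List.nodup_iff_injective_get.1 hp.support_nodup h
  exact congrArg Fin.val this

end SimpleGraph.Walk


lemma mapped_entry (K : Type*) [Field K] (n : ℕ) (G : SimpleGraph (Fin n))
    (c : Sym2 (Fin n) → K) (i j : Fin n) :
    (aeval c) (sparseGenericSym K n G i j)
      = if i = j ∨ G.Adj i j then c s(i, j) else 0 := by
  unfold sparseGenericSym; split <;> simp

theorem part2b (K : Type*) [Field K] (n : ℕ) (hn : 2 ≤ n) (G : SimpleGraph (Fin n))
    (k l : Fin n) (hr : G.Reachable k l) :
    ((sparseGenericSym K n G).submatrix (dropIdx hn k) (dropIdx hn l)).det ≠ 0 := by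
  classical
  obtain ⟨w⟩ := hr
  set q : G.Walk k l := w.toPath.1 with hq
  have hqp : q.IsPath := w.toPath.2
  set m := q.length with hmdef
  set v : ℕ → Fin n := q.getVert with hv
  have hv0 : v 0 = k := q.getVert_zero
  have hvm : v m = l := q.getVert_length
  have hvinj : ∀ s t, s ≤ m → t ≤ m → v s = v t → s = t :=
    SimpleGraph.Walk.getVert_injOn_of_isPath hqp
  set T : Finset (Fin n) := q.support.toFinset with hT
  have hTcard : T.card = m + 1 := by
    rw [hT, List.toFinset_card_of_nodup hqp.support_nodup, q.length_support]
  have hmemT : ∀ t, t ≤ m → v t ∈ T := fun t ht => by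
    rw [hT, List.mem_toFinset]; exact q.getVert_mem_support t
  have hmn : m + 1 ≤ n := by
    have h1 : T.card ≤ Fintype.card (Fin n) := T.card_le_univ
    rw [hTcard, Fintype.card_fin] at h1
    exact h1
  have hTccard : Tᶜ.card = n - 1 - m := by
    rw [Finset.card_compl, hTcard, Fintype.card_fin]; omega
  set u : Fin (n - 1 - m) → Fin n := fun i => ↑(Tᶜ.orderIsoOfFin hTccard i) with hu
  have huinj : Function.Injective u := by
    intro a b hab
    exact (Tᶜ.orderIsoOfFin hTccard).injective (Subtype.ext hab)
  have huT : ∀ i, u i ∉ T := by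
    intro i
    have h2 := (Tᶜ.orderIsoOfFin hTccard i).2
    rw [Finset.mem_compl] at h2
    exact h2
  -- row and column enumerations
  set r : Fin (n-1) → Fin n :=
    fun i => if h : (i : ℕ) < m then v ((i : ℕ)+1) else u ⟨(i : ℕ) - m, by omega⟩ with hrdef
  set c : Fin (n-1) → Fin n :=
    fun i => if h : (i : ℕ) < m then v (i : ℕ) else u ⟨(i : ℕ) - m, by omega⟩ with hcdef
  have hrk : ∀ i, r i ≠ k := by
    intro i
    rw [hrdef]
    dsimp only
    split
    · rename_i h
      intro hc
      rw [← hv0] at hc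
      have := hvinj _ _ (by omega) (by omega) hc
      omega
    · intro hc
      have hk : k ∈ T := by rw [← hv0]; exact hmemT 0 (by omega)
      exact huT _ (by rw [hc]; exact hk)
  have hcl : ∀ i, c i ≠ l := by
    intro i
    rw [hcdef]
    dsimp only
    split
    · rename_i h
      intro hc
      rw [← hvm] at hc
      have := hvinj _ _ (by omega) (by omega) hc
      omega
    · intro hc
      have hl : l ∈ T := by rw [← hvm]; exact hmemT m (le_refl m)
      exact huT _ (by rw [hc]; exact hl)
  have hrinj : Function.Injective r := by
    intro a b hab
    rw [hrdef] at hab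
    dsimp only at hab
    apply Fin.ext
    split at hab <;> split at hab
    · have := hvinj _ _ (by omega) (by omega) hab; omega
    · exact absurd hab.symm (fun hc => huT _ (hc ▸ hmemT _ (by omega)))
    · exact absurd hab (fun hc => huT _ (hc ▸ hmemT _ (by omega)))
    · rename_i h1 h2
      have := congrArg Fin.val (huinj hab)
      have hb := b.isLt
      have ha := a.isLt
      simp only at this
      omega
  have hcinj : Function.Injective c := by
    intro a b hab
    rw [hcdef] at hab
    dsimp only at hab
    apply Fin.ext
    split at hab <;> split at hab
    · have := hvinj _ _ (by omega) (by omega) hab; omega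
    · exact absurd hab.symm (fun hc => huT _ (hc ▸ hmemT _ (by omega)))
    · exact absurd hab (fun hc => huT _ (hc ▸ hmemT _ (by omega)))
    · rename_i h1 h2
      have := congrArg Fin.val (huinj hab)
      simp only at this
      omega
  -- permutations relating r, c to dropIdx
  have hρbij : Function.Bijective (fun i => (dropEquiv hn k).symm ⟨r i, hrk i⟩) :=
    (Finite.injective_iff_bijective).1 (fun a b hab =>
      hrinj (congrArg Subtype.val ((dropEquiv hn k).symm.injective hab)))
  set ρ : Equiv.Perm (Fin (n-1)) := Equiv.ofBijective _ hρbij with hρdef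
  have hρ : ∀ i, dropIdx hn k (ρ i) = r i := by
    intro i
    have : (dropEquiv hn k) (ρ i) = ⟨r i, hrk i⟩ := by
      rw [hρdef]; exact (dropEquiv hn k).apply_symm_apply _
    have := congrArg Subtype.val this
    rwa [dropEquiv_apply] at this
  have hτbij : Function.Bijective (fun i => (dropEquiv hn l).symm ⟨c i, hcl i⟩) :=
    (Finite.injective_iff_bijective).1 (fun a b hab =>
      hcinj (congrArg Subtype.val ((dropEquiv hn l).symm.injective hab)))
  set τ : Equiv.Perm (Fin (n-1)) := Equiv.ofBijective _ hτbij with hτdef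
  have hτ : ∀ i, dropIdx hn l (τ i) = c i := by
    intro i
    have : (dropEquiv hn l) (τ i) = ⟨c i, hcl i⟩ := by
      rw [hτdef]; exact (dropEquiv hn l).apply_symm_apply _
    have := congrArg Subtype.val this
    rwa [dropEquiv_apply] at this
  -- the evaluated matrix
  set E : Matrix (Fin n) (Fin n) K :=
    fun a b => if a = b ∨ s(a,b) ∈ q.edges then 1 else 0 with hE
  set φ : SymPolyRing K n →+* K :=
    (aeval (fun e : Sym2 (Fin n) => if e.IsDiag ∨ e ∈ q.edges then (1:K) else 0)).toRingHom with hφ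
  have hEval : ∀ a b, φ (sparseGenericSym K n G a b) = E a b := by
    intro a b
    rw [hφ]
    show (aeval _) (sparseGenericSym K n G a b) = E a b
    rw [mapped_entry, hE]
    by_cases hab : a = b
    · simp [hab, Sym2.mk_isDiag_iff]
    · by_cases hadj : G.Adj a b
      · simp [hab, hadj, Sym2.mk_isDiag_iff]
      · have hne : s(a,b) ∉ q.edges := fun hc =>
          hadj ((G.mem_edgeSet).1 (q.edges_subset_edgeSet hc))
        simp [hab, hadj, hne]
  set SE : Matrix (Fin (n-1)) (Fin (n-1)) K :=
    E.submatrix (dropIdx hn k) (dropIdx hn l) with hSE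
  set B : Matrix (Fin (n-1)) (Fin (n-1)) K := SE.submatrix ρ τ with hB
  have hBentry : ∀ i j, B i j = E (r i) (c j) := by
    intro i j
    rw [hB, hSE]
    show E (dropIdx hn k (ρ i)) (dropIdx hn l (τ j)) = _
    rw [hρ, hτ]
  -- diagonal of B is 1
  have hBdiag : ∀ i, B i i = 1 := by
    intro i
    rw [hBentry, hrdef, hcdef, hE]
    dsimp only
    by_cases h : (i : ℕ) < m
    · rw [dif_pos h, dif_pos h]
      have hmem : s(v ((i:ℕ)+1), v (i:ℕ)) ∈ q.edges := by
        rw [Sym2.eq_swap]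
        exact q.mem_edges_of_index (i:ℕ) h
      rw [if_pos (Or.inr hmem)]
    · rw [dif_neg h, dif_neg h, if_pos (Or.inl rfl)]
  -- B is upper triangular
  have hBtri : B.BlockTriangular id := by
    intro i j hij
    simp only [id] at hij
    rw [hBentry, hrdef, hcdef, hE]
    dsimp only
    by_cases hi : (i : ℕ) < m
    · have hj : (j : ℕ) < m := by have := Fin.lt_iff_val_lt_val.1 hij; omega
      rw [dif_pos hi, dif_pos hj]
      have hij' : (j : ℕ) < (i : ℕ) := Fin.lt_iff_val_lt_val.1 hij
      apply if_neg
      rintro (hc | hc)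
      · have := hvinj _ _ (by omega) (by omega) hc; omega
      · obtain ⟨t, ht, hte⟩ := q.index_of_mem_edges _ hc
        rw [Sym2.eq_iff] at hte
        rcases hte with ⟨h1, h2⟩ | ⟨h1, h2⟩
        · have e1 := hvinj _ _ (by omega) (by omega) h1
          have e2 := hvinj _ _ (by omega) (by omega) h2
          omega
        · have e1 := hvinj _ _ (by omega) (by omega) h1
          have e2 := hvinj _ _ (by omega) (by omega) h2
          omega
    · rw [dif_neg hi]
      by_cases hj : (j : ℕ) < m
      · rw [dif_pos hj]
        apply if_neg
        rintro (hc | hc)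
        · exact huT _ (hc ▸ hmemT _ (by omega))
        · exact huT _ (by
            rw [hT, List.mem_toFinset]
            exact q.fst_mem_support_of_mem_edges hc)
      · rw [dif_neg hj]
        apply if_neg
        rintro (hc | hc)
        · have := congrArg Fin.val (huinj hc)
          simp only at this
          have hij' : (j : ℕ) < (i : ℕ) := Fin.lt_iff_val_lt_val.1 hij
          have hi2 := i.isLt
          have hj2 := j.isLt
          omega
        · exact huT _ (by
            rw [hT, List.mem_toFinset]
            exact q.fst_mem_support_of_mem_edges hc)
  have hBdet : B.det = 1 := by
    rw [Matrix.det_of_upperTriangular hBtri]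
    exact Finset.prod_eq_one (fun i _ => hBdiag i)
  -- conclude det SE ≠ 0
  have hSEdet : SE.det ≠ 0 := by
    intro h0
    have h1 : B = (SE.submatrix id ⇑τ).submatrix ⇑ρ id := by
      rw [hB, Matrix.submatrix_submatrix]
      rfl
    rw [h1, Matrix.det_permute, Matrix.det_permute', h0, mul_zero, mul_zero] at hBdet
    exact one_ne_zero hBdet.symm
  -- conclude the polynomial determinant is nonzero
  intro h0
  apply hSEdet
  have h1 : φ (((sparseGenericSym K n G).submatrix (dropIdx hn k) (dropIdx hn l)).det) = 0 := by
    rw [h0]; simp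
  rw [RingHom.map_det] at h1
  have h2 : φ.mapMatrix ((sparseGenericSym K n G).submatrix (dropIdx hn k) (dropIdx hn l)) = SE := by
    ext i j
    show φ (sparseGenericSym K n G (dropIdx hn k i) (dropIdx hn l j)) = _
    rw [hEval, hSE]
    rfl
  rwa [h2] at h1

lemma sparse_ne_zero_cond (K : Type*) [Field K] (n : ℕ) (G : SimpleGraph (Fin n))
    {a b : Fin n} (h : sparseGenericSym K n G a b ≠ 0) : a = b ∨ G.Adj a b := by
  by_contra hc
  exact h (by unfold sparseGenericSym; rw [if_neg hc])

theorem part2a (K : Type*) [Field K] (n : ℕ) (hn : 2 ≤ n) (G : SimpleGraph (Fin n))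
    (k l : Fin n) (hkl : k < l) (hnr : ¬ G.Reachable k l) :
    ((sparseGenericSym K n G).submatrix (dropIdx hn k) (dropIdx hn l)).det = 0 := by
  rw [Matrix.det_apply]
  apply Finset.sum_eq_zero
  intro σ _
  suffices h : ∏ i : Fin (n-1),
      (sparseGenericSym K n G).submatrix (dropIdx hn k) (dropIdx hn l) (σ i) i = 0 by
    rw [h, smul_zero]
  by_contra hp
  -- every factor is nonzero
  have hfac : ∀ i : Fin (n-1),
      dropIdx hn k (σ i) = dropIdx hn l i ∨ G.Adj (dropIdx hn k (σ i)) (dropIdx hn l i) := by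
    intro i
    apply sparse_ne_zero_cond K n G
    intro hz
    exact hp (Finset.prod_eq_zero (Finset.mem_univ i) hz)
  -- the bijection Φ : {x ≠ l} ≃ {x ≠ k}
  set Φ : {x : Fin n // x ≠ l} ≃ {x : Fin n // x ≠ k} :=
    ((dropEquiv hn l).symm.trans (σ.trans (dropEquiv hn k))) with hΦ
  have hΦprop : ∀ c : {x : Fin n // x ≠ l}, G.Reachable ↑(Φ c) ↑c := by
    intro c
    have h1 : (Φ c : Fin n) = dropIdx hn k (σ ((dropEquiv hn l).symm c)) := rfl
    have h2 : dropIdx hn l ((dropEquiv hn l).symm c) = ↑c := by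
      have := (dropEquiv hn l).apply_symm_apply c
      exact congrArg Subtype.val this
    rcases hfac ((dropEquiv hn l).symm c) with h | h
    · rw [h1, h, h2]
    · rw [h2] at h; rw [h1]; exact h.reachable
  set Ψ := Φ.symm with hΨ
  have hΨprop : ∀ b : {x : Fin n // x ≠ k}, G.Reachable ↑b ↑(Ψ b) := by
    intro b
    have := hΦprop (Ψ b)
    rwa [Equiv.apply_symm_apply] at this
  -- cardinality contradiction
  set C : Finset (Fin n) := Finset.univ.filter (fun x => G.Reachable x l) with hC
  have hlC : l ∈ C := by simp only [hC, Finset.mem_filter]; exact ⟨Finset.mem_univ _, SimpleGraph.Reachable.refl l⟩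
  have hkC : k ∉ C := by simp only [hC, Finset.mem_filter]; intro h; exact hnr h.2
  set f : Fin n → Fin n := fun x => if h : x ≠ k then ↑(Ψ ⟨x, h⟩) else x with hf
  have hmaps : ∀ x ∈ C, f x ∈ C.erase l := by
    intro x hx
    have hxk : x ≠ k := fun hc => hkC (hc ▸ hx)
    have hfx : f x = ↑(Ψ ⟨x, hxk⟩) := by rw [hf]; simp [hxk]
    rw [Finset.mem_erase]
    constructor
    · rw [hfx]; exact (Ψ ⟨x, hxk⟩).2
    · rw [hC, Finset.mem_filter] at hx ⊢
      refine ⟨Finset.mem_univ _, ?_⟩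
      have h1 : G.Reachable x (f x) := by rw [hfx]; exact hΨprop ⟨x, hxk⟩
      exact h1.symm.trans hx.2
  have hinj : Set.InjOn f ↑C := by
    intro x hx y hy hxy
    have hxk : x ≠ k := fun hc => hkC (hc ▸ hx)
    have hyk : y ≠ k := fun hc => hkC (hc ▸ hy)
    have : ↑(Ψ ⟨x, hxk⟩) = (↑(Ψ ⟨y, hyk⟩) : Fin n) := by
      rw [hf] at hxy; simpa [hxk, hyk] using hxy
    have := Ψ.injective (Subtype.ext this)
    exact congrArg Subtype.val this
  have hcard := Finset.card_le_card_of_injOn f hmaps hinj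
  rw [Finset.card_erase_of_mem hlC] at hcard
  have hpos : 0 < C.card := Finset.card_pos.2 ⟨l, hlC⟩
  omega

theorem part1 (K : Type*) [Field K] (n : ℕ) (hn : 2 ≤ n) (G : SimpleGraph (Fin n)) (k : Fin n) :
    ((sparseGenericSym K n G).submatrix (dropIdx hn k) (dropIdx hn k)).det ≠ 0 := by
  intro h0
  set φ : SymPolyRing K n →+* K :=
    (aeval (fun s : Sym2 (Fin n) => if s.IsDiag then (1:K) else 0)).toRingHom with hφ
  have h1 : φ (((sparseGenericSym K n G).submatrix (dropIdx hn k) (dropIdx hn k)).det) = 0 := by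
    rw [h0]; simp
  rw [RingHom.map_det] at h1
  have h2 : (φ.mapMatrix ((sparseGenericSym K n G).submatrix (dropIdx hn k) (dropIdx hn k)))
      = (1 : Matrix (Fin (n-1)) (Fin (n-1)) K) := by
    ext i j
    show φ (sparseGenericSym K n G (dropIdx hn k i) (dropIdx hn k j)) = _
    rw [hφ]
    show (aeval _) (sparseGenericSym K n G (dropIdx hn k i) (dropIdx hn k j)) = _
    rw [mapped_entry]
    by_cases h : i = j
    · simp [h, Matrix.one_apply]
    · have hd : dropIdx hn k i ≠ dropIdx hn k j := fun hc => h (dropIdx_injective hn k hc)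
      by_cases h2 : G.Adj (dropIdx hn k i) (dropIdx hn k j) <;>
        simp [hd, h2, Sym2.mk_isDiag_iff, Matrix.one_apply, h]
  rw [h2, Matrix.det_one] at h1
  exact one_ne_zero h1


/-- Every principal submaximal minor `det((X_G)_{[n]∖k,[n]∖k})` of the sparse generic
symmetric matrix `X_G` is a nonzero polynomial, and for `k < l` the submaximal minor
`det((X_G)_{[n]∖k,[n]∖l})` is the zero polynomial if and only if there is no path in `G`
between `k` and `l`. -/
theorem submaximal_minor_sparse_symmetric_eq_zero_iff
    (K : Type*) [Field K] (n : ℕ) (hn : 2 ≤ n) (G : SimpleGraph (Fin n)) :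
    (∀ k : Fin n,
      ((sparseGenericSym K n G).submatrix (dropIdx hn k) (dropIdx hn k)).det ≠ 0) ∧
    (∀ k l : Fin n, k < l →
      (((sparseGenericSym K n G).submatrix (dropIdx hn k) (dropIdx hn l)).det = 0 ↔
        ¬ G.Reachable k l)) := by
  refine ⟨fun k => part1 K n hn G k, fun k l hkl => ⟨fun h0 hr => part2b K n hn G k l hr h0, fun hnr => part2a K n hn G k l hkl hnr⟩⟩
end
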